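/- arXiv:2507.07402 — 10 statements merged into one kernel-verified Lean document; each statement's English description precedes it below -/
import Mathlib

section
/- With N_d(n) defined by the DSC recurrence N_d(n+1) = N_d(n) + ∑_{j=d-1}^{n} C(j+1,d)·N_j(n), N_0(0)=1, N_d(n)=0 for d>n, one has N_{n-1}(n) = n(n+3)/2 for all n≥1. -/
theorem stmt_4 (N : ℕ → ℕ → ℕ) (h0 : N 0 0 = 1)
    (hz : ∀ d n : ℕ, n < d → N d n = 0)
    (hrec : ∀ d n : ℕ, N d (n + 1) =
      N d n + ∑ j ∈ Finset.Icc (d - 1) n, (j + 1).choose d * N j n) :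
    ∀ n : ℕ, 1 ≤ n → 2 * N (n - 1) n = n * (n + 3) := by
  have diag : ∀ n : ℕ, N n n = 1 := by
    intro n
    induction n with
    | zero => exact h0
    | succ m ih =>
      rw [hrec (m + 1) m]
      have : (m + 1) - 1 = m := by omega
      rw [this, hz (m + 1) m (by omega), Finset.Icc_self, Finset.sum_singleton,
        Nat.choose_self, ih]
  intro n hn
  induction n with
  | zero => omega
  | succ m ih =>
    rcases Nat.eq_zero_or_pos m with hm | hm
    · subst hm
      simp only [Nat.add_sub_cancel]
      rw [hrec 0 0]
      simp [h0]
    · have ihm := ih hm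
      have hstep : N m (m + 1) = N (m - 1) m + (m + 2) := by
        rw [hrec m m]
        have h1 : Finset.Icc (m - 1) m = insert m (Finset.Icc (m - 1) (m - 1)) := by
          have : m - 1 + 1 = m := by omega
          ext x
          simp [Finset.mem_Icc]
          omega
        rw [h1, Finset.sum_insert (by simp [Finset.mem_Icc]; omega),
          Finset.Icc_self, Finset.sum_singleton]
        have : m - 1 + 1 = m := by omega
        rw [this, Nat.choose_succ_self_right, diag m, Nat.choose_self]
        omega
      simp only [Nat.add_sub_cancel]
      rw [hstep]
      have : m - 1 + 1 = m := by omega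
      nlinarith [ihm]
end

section
/- With N_d(n) defined by the DSC recurrence, N_{n-2}(n) = C(n,2)·(n+1)(3n+14)/12 for all n≥2. -/
lemma choose2 : ∀ m : ℕ, 2 * m.choose 2 = m * (m - 1) := by
  intro m
  induction m with
  | zero => simp
  | succ k ih =>
      rw [Nat.choose_succ_succ, Nat.choose_one_right]
      cases k with
      | zero => simp
      | succ j =>
          simp only [Nat.succ_sub_one] at ih ⊢
          ring_nf
          ring_nf at ih
          omega

theorem stmt_5 (N : ℕ → ℕ → ℕ) (h0 : N 0 0 = 1)
    (hz : ∀ d n : ℕ, n < d → N d n = 0)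
    (hrec : ∀ d n : ℕ, N d (n + 1) =
      N d n + ∑ j ∈ Finset.Icc (d - 1) n, (j + 1).choose d * N j n) :
    ∀ n : ℕ, 2 ≤ n → 12 * N (n - 2) n = n.choose 2 * ((n + 1) * (3 * n + 14)) := by
  have hA : ∀ n, N n n = 1 := by
    intro n
    induction n with
    | zero => exact h0
    | succ n ih =>
        rw [hrec, hz (n+1) n (by omega)]
        have he : n + 1 - 1 = n := by omega
        rw [he, Finset.Icc_self, Finset.sum_singleton, Nat.choose_self, ih]
  have hB : ∀ n, 2 * N n (n+1) = n*n + 5*n + 4 := by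
    intro n
    induction n with
    | zero =>
        have h1 := hrec 0 0
        simp [Finset.Icc_self, h0] at h1
        norm_num
        omega
    | succ n ih =>
        have h1 := hrec (n+1) (n+1)
        have he : n + 1 - 1 = n := by omega
        rw [he, Finset.sum_Icc_succ_top (by omega), Finset.Icc_self,
          Finset.sum_singleton, Nat.choose_self, Nat.choose_succ_self_right,
          hA (n+1)] at h1
        rw [h1]
        nlinarith [ih]
  have hC : ∀ n, 24 * N n (n+2) = (n+2)*(n+1)*((n+3)*(3*n+20)) := by
    intro n
    induction n with
    | zero =>
        have h1 := hrec 0 1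
        rw [show (0:ℕ)-1 = 0 from rfl, Finset.sum_Icc_succ_top (by omega),
          Finset.Icc_self, Finset.sum_singleton] at h1
        simp only [Nat.choose_zero_right, one_mul] at h1
        have hb0 := hB 0
        have ha1 := hA 1
        norm_num at hb0 h1 ⊢
        omega
    | succ n ih =>
        have h1 := hrec (n+1) (n+2)
        have he : n + 1 - 1 = n := by omega
        rw [he, Finset.sum_Icc_succ_top (by omega),
          Finset.sum_Icc_succ_top (by omega), Finset.Icc_self,
          Finset.sum_singleton, Nat.choose_self, Nat.choose_succ_self_right,
          hA (n+2)] at h1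
        -- h1 : N (n+1) (n+3) = N (n+1) (n+2) + (1 * N n (n+2) + (n+2) * N (n+1) (n+2) + (n+3).choose (n+1) * 1)
        have hc3 : 2 * (n+3).choose (n+1) = (n+3) * (n+2) := by
          have hs := Nat.choose_symm (show n+1 ≤ n+3 by omega)
          rw [show n+3-(n+1) = 2 from by omega] at hs
          rw [← hs, choose2]
          simp
        have hb := hB (n+1)
        rw [h1]
        have expand : 24 * (N (n+1) (n+2) + (1 * N n (n+2) + (n+2) * N (n+1) (n+2)
              + (n+3).choose (n+1) * 1))
            = 24 * N n (n+2) + 12*(n+3) * (2 * N (n+1) (n+2))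
              + 12 * (2 * (n+3).choose (n+1)) := by ring
        rw [expand, ih, hb, hc3]
        ring
  intro n hn
  obtain ⟨m, rfl⟩ : ∃ m, n = m + 2 := ⟨n - 2, by omega⟩
  have hc := hC m
  have hch : 2 * (m+2).choose 2 = (m+2) * (m+1) := by
    rw [choose2]; simp
  have key : 2 * (12 * N (m+2-2) (m+2)) = 2 * ((m+2).choose 2 * ((m+2+1) * (3*(m+2)+14))) := by
    rw [show m+2-2 = m from by omega]
    calc 2 * (12 * N m (m+2)) = 24 * N m (m+2) := by ring
      _ = (m+2)*(m+1)*((m+3)*(3*m+20)) := hc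
      _ = (2 * (m+2).choose 2) * ((m+3)*(3*m+20)) := by rw [hch]
      _ = 2 * ((m+2).choose 2 * ((m+2+1) * (3*(m+2)+14))) := by ring
  omega
end

section
/- The exponential generating function of the total simplex counts N(n) in the DSC model satisfies ∑_{n≥0} N(n)·x^n/n! = e^x/(1-x)^2 as formal power series. -/
open Nat

/-- Auxiliary: the weighted sum `∑ k ≤ n, C(n-k+m, m) * n!/k!` over ℚ. -/
private noncomputable def Qaux (m n : ℕ) : ℚ :=
  ∑ k ∈ Finset.range (n + 1), ((n - k + m).choose m : ℚ) * ((n ! : ℚ) / (k ! : ℚ))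

private lemma Qaux_rec (m n : ℕ) :
    Qaux m (n + 1) = Qaux m n + (m + 1) * Qaux (m + 1) n := by
  have hfac : ∀ j : ℕ, ((j ! : ℚ)) ≠ 0 := fun j => by
    exact_mod_cast (Nat.factorial_ne_zero j)
  unfold Qaux
  rw [Finset.sum_range_succ]
  have hlast : ((n + 1 - (n + 1) + m).choose m : ℚ) * (((n+1)! : ℚ) / ((n+1)! : ℚ)) = 1 := by
    simp [Nat.sub_self, Nat.choose_self, div_self (hfac (n+1))]
  rw [hlast]
  have key : ∀ k ∈ Finset.range (n + 1),
      ((n + 1 - k + m).choose m : ℚ) * (((n+1)! : ℚ) / (k ! : ℚ)) =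
      ((m : ℚ) + 1) * (((n - k + (m + 1)).choose (m + 1) : ℚ) * ((n ! : ℚ) / (k ! : ℚ)))
      + (k : ℚ) * (((n + 1 - k + m).choose m : ℚ) * ((n ! : ℚ) / (k ! : ℚ))) := by
    intro k hk
    have hk' : k ≤ n := Nat.lt_succ_iff.mp (Finset.mem_range.mp hk)
    set v := n - k with hvdef
    have hv1 : n + 1 - k = v + 1 := by omega
    have hn : n = v + k := by omega
    have hnat : (v + 1 + m).choose (m + 1) * (m + 1) = (v + 1 + m).choose m * (v + 1) := by
      have h := Nat.choose_succ_right_eq (v + 1 + m) m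
      have h2 : v + 1 + m - m = v + 1 := by omega
      rw [h2] at h
      exact h
    have hnatQ : ((v + 1 + m).choose (m + 1) : ℚ) * ((m : ℚ) + 1)
        = ((v + 1 + m).choose m : ℚ) * ((v : ℚ) + 1) := by exact_mod_cast hnat
    have hfacn : ((n + 1)! : ℚ) = ((n : ℚ) + 1) * (n ! : ℚ) := by
      push_cast [Nat.factorial_succ]; ring
    have hnk : n - k + (m + 1) = v + 1 + m := by omega
    rw [hv1, hnk, hfacn]
    have hnc : (n : ℚ) = (v : ℚ) + (k : ℚ) := by exact_mod_cast hn
    rw [hnc]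
    field_simp
    ring_nf
    ring_nf at hnatQ
    nlinarith [hnatQ, hfac k, sq_nonneg ((k ! : ℚ))]
  rw [Finset.sum_congr rfl key, Finset.sum_add_distrib]
  have h2 : ∑ k ∈ Finset.range (n + 1),
      (k : ℚ) * (((n + 1 - k + m).choose m : ℚ) * ((n ! : ℚ) / (k ! : ℚ)))
      = Qaux m n - 1 := by
    rw [Finset.sum_range_succ']
    simp only [Nat.cast_zero, zero_mul, add_zero]
    have hterm : ∀ k ∈ Finset.range n,
        ((k : ℚ) + 1) * (((n + 1 - (k + 1) + m).choose m : ℚ) * ((n ! : ℚ) / ((k+1)! : ℚ)))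
        = ((n - k + m).choose m : ℚ) * ((n ! : ℚ) / (k ! : ℚ)) := by
      intro k hk
      have h1 : n + 1 - (k + 1) = n - k := by omega
      rw [h1]
      have h2 : ((k + 1)! : ℚ) = ((k : ℚ) + 1) * (k ! : ℚ) := by
        push_cast [Nat.factorial_succ]; ring
      rw [h2]
      have hk1 : (k : ℚ) + 1 ≠ 0 := by positivity
      field_simp
    have := Finset.sum_congr rfl hterm
    push_cast at this ⊢
    rw [this]
    unfold Qaux
    rw [Finset.sum_range_succ]
    have : ((n - n + m).choose m : ℚ) * ((n ! : ℚ) / (n ! : ℚ)) = 1 := by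
      simp [Nat.sub_self, Nat.choose_self, div_self (hfac n)]
    rw [this]
    ring
  rw [h2]
  have h3 : ∑ k ∈ Finset.range (n + 1),
      ((m : ℚ) + 1) * (((n - k + (m + 1)).choose (m + 1) : ℚ) * ((n ! : ℚ) / (k ! : ℚ)))
      = ((m : ℚ) + 1) * Qaux (m + 1) n := by
    unfold Qaux
    rw [← Finset.mul_sum]
  rw [h3]
  unfold Qaux
  ring

private lemma weighted_sum_eq (N : ℕ → ℕ → ℕ) (h0 : N 0 0 = 1)
    (hz : ∀ d n : ℕ, n < d → N d n = 0)
    (hrec : ∀ d n : ℕ, N d (n + 1) =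
      N d n + ∑ j ∈ Finset.Icc (d - 1) n, (j + 1).choose d * N j n) :
    ∀ n m : ℕ, ∑ d ∈ Finset.range (n + 1), (m : ℚ) ^ d * (N d n : ℚ) = Qaux m n := by
  intro n
  induction n with
  | zero =>
    intro m
    simp [Qaux, h0]
  | succ n ih =>
    intro m
    have hstep : ∑ d ∈ Finset.range (n + 2), (m : ℚ) ^ d * (N d (n+1) : ℚ)
        = ∑ d ∈ Finset.range (n + 2), ((m : ℚ) ^ d * (N d n : ℚ)
          + (m : ℚ) ^ d * ∑ j ∈ Finset.Icc (d - 1) n, ((j + 1).choose d : ℚ) * (N j n : ℚ)) := by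
      apply Finset.sum_congr rfl
      intro d _
      rw [hrec d n]
      push_cast
      ring
    rw [hstep, Finset.sum_add_distrib]
    have hA : ∑ d ∈ Finset.range (n + 2), (m : ℚ) ^ d * (N d n : ℚ)
        = ∑ d ∈ Finset.range (n + 1), (m : ℚ) ^ d * (N d n : ℚ) := by
      rw [Finset.sum_range_succ, hz (n+1) n (by omega)]
      simp
    have hB : ∑ d ∈ Finset.range (n + 2),
        (m : ℚ) ^ d * ∑ j ∈ Finset.Icc (d - 1) n, ((j + 1).choose d : ℚ) * (N j n : ℚ)
        = ((m : ℚ) + 1) * ∑ j ∈ Finset.range (n + 1), ((m : ℚ) + 1) ^ j * (N j n : ℚ) := by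
      have hswap : ∑ d ∈ Finset.range (n + 2),
          ∑ j ∈ Finset.Icc (d - 1) n, (m : ℚ) ^ d * (((j + 1).choose d : ℚ) * (N j n : ℚ))
          = ∑ j ∈ Finset.range (n + 1),
            ∑ d ∈ Finset.range (j + 2), (m : ℚ) ^ d * (((j + 1).choose d : ℚ) * (N j n : ℚ)) := by
        apply Finset.sum_comm'
        intro d j
        simp only [Finset.mem_range, Finset.mem_Icc]
        omega
      calc ∑ d ∈ Finset.range (n + 2),
            (m : ℚ) ^ d * ∑ j ∈ Finset.Icc (d - 1) n, ((j + 1).choose d : ℚ) * (N j n : ℚ)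
          = ∑ d ∈ Finset.range (n + 2),
            ∑ j ∈ Finset.Icc (d - 1) n, (m : ℚ) ^ d * (((j + 1).choose d : ℚ) * (N j n : ℚ)) := by
            apply Finset.sum_congr rfl; intro d _; rw [Finset.mul_sum]
        _ = ∑ j ∈ Finset.range (n + 1),
            ∑ d ∈ Finset.range (j + 2), (m : ℚ) ^ d * (((j + 1).choose d : ℚ) * (N j n : ℚ)) := hswap
        _ = ∑ j ∈ Finset.range (n + 1), ((m : ℚ) + 1) ^ (j + 1) * (N j n : ℚ) := by
            apply Finset.sum_congr rfl
            intro j _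
            have hbin : ((m : ℚ) + 1) ^ (j + 1)
                = ∑ d ∈ Finset.range (j + 2), (m : ℚ) ^ d * ((j + 1).choose d : ℚ) := by
              rw [add_pow]
              apply Finset.sum_congr rfl
              intro d _
              rw [one_pow]; ring
            rw [hbin, Finset.sum_mul]
            apply Finset.sum_congr rfl
            intro d _
            ring
        _ = ((m : ℚ) + 1) * ∑ j ∈ Finset.range (n + 1), ((m : ℚ) + 1) ^ j * (N j n : ℚ) := by
            rw [Finset.mul_sum]
            apply Finset.sum_congr rfl
            intro j _
            ring
    rw [hA, hB]
    have ih1 := ih m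
    have ih2 := ih (m + 1)
    push_cast at ih2
    rw [ih1, ih2, Qaux_rec]

theorem stmt_8 (N : ℕ → ℕ → ℕ) (h0 : N 0 0 = 1)
    (hz : ∀ d n : ℕ, n < d → N d n = 0)
    (hrec : ∀ d n : ℕ, N d (n + 1) =
      N d n + ∑ j ∈ Finset.Icc (d - 1) n, (j + 1).choose d * N j n)
    (NT : ℕ → ℕ) (hNT : ∀ n : ℕ, NT n = ∑ d ∈ Finset.range (n + 1), N d n) :
    PowerSeries.mk (fun n : ℕ => (NT n : ℚ) / (n !)) =
      PowerSeries.exp ℚ * (PowerSeries.invOfUnit (1 - PowerSeries.X) 1) ^ 2 := by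
  have hfac : ∀ j : ℕ, ((j ! : ℚ)) ≠ 0 := fun j => by
    exact_mod_cast (Nat.factorial_ne_zero j)
  -- Step 1: identify the inverse of 1 - X
  have h2 : (1 - PowerSeries.X : PowerSeries ℚ) * PowerSeries.mk (fun _ => (1:ℚ)) = 1 := by
    ext n
    rw [sub_mul, one_mul, map_sub]
    cases n with
    | zero => simp
    | succ n => simp [PowerSeries.coeff_succ_X_mul, PowerSeries.coeff_mk]
  have hinv : PowerSeries.invOfUnit (1 - PowerSeries.X : PowerSeries ℚ) 1
      = PowerSeries.mk (fun _ => (1:ℚ)) := by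
    have h1 : (1 - PowerSeries.X : PowerSeries ℚ)
        * PowerSeries.invOfUnit (1 - PowerSeries.X) 1 = 1 :=
      PowerSeries.mul_invOfUnit _ _ (by simp)
    calc PowerSeries.invOfUnit (1 - PowerSeries.X : PowerSeries ℚ) 1
        = PowerSeries.invOfUnit (1 - PowerSeries.X : PowerSeries ℚ) 1
          * ((1 - PowerSeries.X) * PowerSeries.mk (fun _ => (1:ℚ))) := by rw [h2, mul_one]
      _ = ((1 - PowerSeries.X) * PowerSeries.invOfUnit (1 - PowerSeries.X) 1)
          * PowerSeries.mk (fun _ => (1:ℚ)) := by ring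
      _ = PowerSeries.mk (fun _ => (1:ℚ)) := by rw [h1, one_mul]
  rw [hinv]
  have hsq : (PowerSeries.mk (fun _ => (1:ℚ))) ^ 2 = PowerSeries.mk (fun n => (n : ℚ) + 1) := by
    ext n
    rw [pow_two, PowerSeries.coeff_mul]
    simp only [PowerSeries.coeff_mk, mul_one]
    rw [Finset.sum_const, Finset.Nat.card_antidiagonal]
    simp
  rw [hsq]
  -- Step 2: coefficient extraction
  have hQ := weighted_sum_eq N h0 hz hrec
  ext n
  rw [PowerSeries.coeff_mk, PowerSeries.coeff_mul,
    Finset.Nat.sum_antidiagonal_eq_sum_range_succ_mk]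
  simp only [PowerSeries.coeff_exp, PowerSeries.coeff_mk, Algebra.algebraMap_self_apply]
  have hNTQ : (NT n : ℚ) = Qaux 1 n := by
    rw [hNT n]
    rw [← hQ n 1]
    push_cast
    simp
  rw [hNTQ]
  unfold Qaux
  rw [Finset.sum_div]
  apply Finset.sum_congr rfl
  intro k hk
  have hk' : k ≤ n := Nat.lt_succ_iff.mp (Finset.mem_range.mp hk)
  rw [Nat.choose_one_right]
  push_cast
  field_simp
end

section
/- For the DSC model, N_d(n) equals n! times the coefficient of x^n in the formal power series (−1)^d/d! · e^x·(log(1−x))^d/(1−x), for all 0 ≤ d ≤ n. -/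
open Nat

/-- The formal power series `log(1-x) = -∑_{k ≥ 1} x^k/k` over `ℚ`. -/
noncomputable def logOneSub : PowerSeries ℚ :=
  PowerSeries.mk fun k => if k = 0 then 0 else -(1 / (k : ℚ))

section DSCProof
open PowerSeries Finset

noncomputable def II : PowerSeries ℚ := PowerSeries.mk fun _ => (1:ℚ)

noncomputable def lc (m d : ℕ) : ℚ := PowerSeries.coeff m (logOneSub ^ d)


lemma one_sub_X_mul_II : ((1 : PowerSeries ℚ) - X) * II = 1 := by
  ext n
  rw [sub_mul, one_mul, map_sub]
  cases n with
  | zero => simp [II]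
  | succ n => simp [II, PowerSeries.coeff_succ_X_mul, PowerSeries.coeff_one]

lemma invOfUnit_eq : PowerSeries.invOfUnit ((1 : PowerSeries ℚ) - X) 1 = II := by
  have h1 : ((1 : PowerSeries ℚ) - X) * PowerSeries.invOfUnit (1 - X) 1 = 1 :=
    PowerSeries.mul_invOfUnit _ _ (by simp)
  calc PowerSeries.invOfUnit ((1 : PowerSeries ℚ) - X) 1
      = (((1 : PowerSeries ℚ) - X) * II) * PowerSeries.invOfUnit (1 - X) 1 := by
        rw [one_sub_X_mul_II, one_mul]
    _ = II * (((1 : PowerSeries ℚ) - X) * PowerSeries.invOfUnit (1 - X) 1) := by ring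
    _ = II := by rw [h1, mul_one]

lemma coeff_mul_II (f : PowerSeries ℚ) (n : ℕ) :
    PowerSeries.coeff n (f * II) = ∑ i ∈ range (n+1), PowerSeries.coeff i f := by
  rw [PowerSeries.coeff_mul, Finset.Nat.sum_antidiagonal_eq_sum_range_succ_mk]
  simp [II]

lemma deriv_log : d⁄dX ℚ logOneSub = -II := by
  ext n
  rw [PowerSeries.coeff_derivative]
  simp only [logOneSub, II, PowerSeries.coeff_mk, map_neg, Nat.succ_ne_zero, if_false]
  have h : ((n:ℚ) + 1) ≠ 0 := by positivity
  field_simp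
  push_cast; ring

lemma deriv_II : d⁄dX ℚ II = II * II := by
  have h0 : d⁄dX ℚ (((1 : PowerSeries ℚ) - X) * II) = 0 := by
    rw [one_sub_X_mul_II]; exact (d⁄dX ℚ).map_one_eq_zero
  rw [Derivation.leibniz] at h0
  simp only [map_sub, PowerSeries.derivative_X, smul_eq_mul] at h0
  have h1 : ((1 : PowerSeries ℚ) - X) * d⁄dX ℚ II = II := by
    have := ((d⁄dX ℚ).map_one_eq_zero)
    rw [this] at h0
    linear_combination h0
  calc d⁄dX ℚ II = (((1:PowerSeries ℚ) - X) * II) * d⁄dX ℚ II := by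
        rw [one_sub_X_mul_II, one_mul]
    _ = II * (((1:PowerSeries ℚ) - X) * d⁄dX ℚ II) := by ring
    _ = II * II := by rw [h1]

lemma deriv_exp' : d⁄dX ℚ (PowerSeries.exp ℚ) = PowerSeries.exp ℚ := by
  ext n
  rw [PowerSeries.coeff_derivative, PowerSeries.coeff_exp, PowerSeries.coeff_exp]
  simp only [Algebra.algebraMap_self, RingHom.id_apply, factorial_succ]
  have h : ((n:ℚ) + 1) ≠ 0 := by positivity
  have h2 : ((n !  : ℚ)) ≠ 0 := by exact_mod_cast n.factorial_ne_zero
  push_cast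
  field_simp

lemma deriv_pow_log (d : ℕ) :
    d⁄dX ℚ (logOneSub ^ d) = -(PowerSeries.C (d:ℚ) * (logOneSub ^ (d-1) * II)) := by
  rw [Derivation.leibniz_pow, _root_.deriv_log]
  rw [smul_eq_mul, nsmul_eq_mul]
  rw [show ((d : PowerSeries ℚ)) = PowerSeries.C (d:ℚ) by push_cast; rfl]
  ring

lemma X_dvd_log : (X : PowerSeries ℚ) ∣ logOneSub := by
  rw [PowerSeries.X_dvd_iff]
  simp [logOneSub, ← PowerSeries.coeff_zero_eq_constantCoeff_apply]

lemma lc_eq_zero {m d : ℕ} (h : m < d) : lc m d = 0 := by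
  have : (X : PowerSeries ℚ) ^ d ∣ logOneSub ^ d := pow_dvd_pow_of_dvd X_dvd_log d
  exact (PowerSeries.X_pow_dvd_iff.mp this) m h

lemma lc_zero (m : ℕ) : lc m 0 = if m = 0 then 1 else 0 := by
  simp [lc, PowerSeries.coeff_one]

lemma key1 (e m : ℕ) :
    ((m:ℚ) + 1) * lc (m+1) (e+1) = -(((e:ℚ)+1) * ∑ i ∈ range (m+1), lc i e) := by
  have h := congrArg (PowerSeries.coeff m) (deriv_pow_log (e+1))
  rw [PowerSeries.coeff_derivative] at h
  rw [map_neg, PowerSeries.coeff_C_mul, coeff_mul_II] at h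
  simp only [Nat.add_sub_cancel] at h
  push_cast at h
  rw [show lc (m+1) (e+1) = PowerSeries.coeff (m+1) (logOneSub ^ (e+1)) from rfl]
  rw [show (∑ i ∈ range (m+1), lc i e) = ∑ i ∈ range (m+1), PowerSeries.coeff i (logOneSub ^ e) from rfl]
  linear_combination h

lemma key1' (e m : ℕ) :
    (m:ℚ) * lc m (e+1) = -(((e:ℚ)+1) * ∑ i ∈ range m, lc i e) := by
  cases m with
  | zero => simp
  | succ m => push_cast; exact key1 e m

lemma key1'' (d m : ℕ) :
    (d:ℚ) * ∑ i ∈ range (m+1), lc i (d-1) = -(((m:ℚ)+1) * lc (m+1) d) := by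
  cases d with
  | zero => simp [lc_zero]
  | succ e => push_cast; rw [key1 e m]; ring

lemma key2 (d m : ℕ) :
    ((m:ℚ) + 1) * lc (m+1) d = (m:ℚ) * lc m d - (d:ℚ) * lc m (d-1) := by
  cases d with
  | zero =>
    simp only [lc_zero, Nat.cast_zero, zero_mul, sub_zero, Nat.succ_ne_zero, if_false, mul_zero]
    cases m with
    | zero => simp
    | succ m => simp
  | succ e =>
    have h1 := key1 e m
    have h2 := key1' e m
    rw [Finset.sum_range_succ] at h1
    push_cast
    linear_combination h1 - h2

lemma star : ∀ m d : ℕ,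
    ∑ j ∈ range (m+1), ((j+1).choose d : ℚ) * ((-1)^j / (j ! : ℚ)) * lc m j
    = (-1)^d/(d ! : ℚ) * ((∑ i ∈ range (m+1), lc i d) + ((m:ℚ)+1) * lc (m+1) d) := by
  intro m
  induction m with
  | zero =>
    intro d
    match d with
    | 0 => simp [lc_zero]
    | 1 =>
      have h1 : lc 0 1 = 0 := lc_eq_zero (by norm_num)
      have h2 : lc 1 1 = -1 := by simp [lc, logOneSub]
      have h3 : lc 0 0 = 1 := by simp [lc_zero]
      simp [h1, h2, h3]
    | (e+2) =>
      have h1 : lc 0 (e+2) = 0 := lc_eq_zero (by omega)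
      have h2 : lc 1 (e+2) = 0 := lc_eq_zero (by omega)
      simp [h1, h2, Nat.choose_eq_zero_of_lt (by omega : 1 < e+2)]
  | succ m ih =>
    intro d
    have hm1 : ((m:ℚ)+1) ≠ 0 := by positivity
    apply mul_left_cancel₀ hm1
    have hL : ((m:ℚ)+1) * (∑ j ∈ range (m+1+1),
          ((j+1).choose d : ℚ) * ((-1)^j / (j ! : ℚ)) * lc (m+1) j)
        = (m:ℚ) * (∑ j ∈ range (m+1), ((j+1).choose d:ℚ) * ((-1)^j/(j ! :ℚ)) * lc m j)
          + ∑ j ∈ range (m+1), ((j+2).choose d : ℚ) * ((-1)^j/(j ! :ℚ)) * lc m j := by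
      rw [Finset.mul_sum]
      have e1 : ∀ j ∈ range (m+2),
          ((m:ℚ)+1) * (((j+1).choose d : ℚ) * ((-1)^j / (j ! :ℚ)) * lc (m+1) j)
          = ((j+1).choose d : ℚ) * ((-1)^j/(j ! :ℚ)) * ((m:ℚ) * lc m j)
            - ((j+1).choose d : ℚ) * ((-1)^j/(j ! :ℚ)) * ((j:ℚ) * lc m (j-1)) := by
        intro j _
        have h := key2 j m
        linear_combination (((j+1).choose d : ℚ) * ((-1)^j/(j ! :ℚ))) * h
      rw [Finset.sum_congr rfl e1, Finset.sum_sub_distrib]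
      have t1 : ∑ x ∈ range (m+2),
            ((x+1).choose d : ℚ) * ((-1)^x/(x ! :ℚ)) * ((m:ℚ) * lc m x)
          = (m:ℚ) * ∑ j ∈ range (m+1), ((j+1).choose d:ℚ) * ((-1)^j/(j ! :ℚ)) * lc m j := by
        rw [Finset.sum_range_succ, lc_eq_zero (lt_add_one m)]
        simp only [mul_zero, add_zero]
        rw [Finset.mul_sum]
        exact Finset.sum_congr rfl fun j _ => by ring
      have t2 : ∑ x ∈ range (m+2),
            ((x+1).choose d : ℚ) * ((-1)^x/(x ! :ℚ)) * ((x:ℚ) * lc m (x-1))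
          = -∑ j ∈ range (m+1), ((j+2).choose d : ℚ) * ((-1)^j/(j ! :ℚ)) * lc m j := by
        rw [Finset.sum_range_succ']
        simp only [Nat.cast_zero, zero_mul, mul_zero, add_zero]
        rw [← Finset.sum_neg_distrib]
        refine Finset.sum_congr rfl fun j _ => ?_
        have hj : (((j+1)! : ℕ) : ℚ) = ((j:ℚ)+1) * (j ! : ℚ) := by
          push_cast [Nat.factorial_succ]; ring
        have hjne : ((j ! : ℕ) : ℚ) ≠ 0 := by exact_mod_cast j.factorial_ne_zero
        have hj1 : ((j:ℚ)+1) ≠ 0 := by positivity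
        simp only [Nat.add_sub_cancel]
        push_cast
        rw [hj]
        field_simp
        ring
      rw [t1, t2]
      ring
    rw [hL]
    match d with
    | 0 =>
      have h0 : lc (m+1) 0 = 0 := by simp [lc_zero]
      have h1 : lc (m+1+1) 0 = 0 := by simp [lc_zero]
      have hS : ∀ k : ℕ, ∑ i ∈ range (k+1), lc i 0 = 1 := by
        intro k
        simp [lc_zero, Finset.sum_ite_eq']
      have hA := ih 0
      rw [hS m, h0] at hA
      simp only [Nat.choose_zero_right, Nat.cast_one, one_mul] at hA ⊢
      rw [hS (m+1), h1]
      push_cast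
      rw [hA]
      ring
    | (e+1) =>
      have hsplit : ∑ j ∈ range (m+1), ((j+2).choose (e+1) : ℚ) * ((-1)^j/(j ! :ℚ)) * lc m j
          = (∑ j ∈ range (m+1), ((j+1).choose e:ℚ) * ((-1)^j/(j ! :ℚ)) * lc m j)
            + ∑ j ∈ range (m+1), ((j+1).choose (e+1):ℚ) * ((-1)^j/(j ! :ℚ)) * lc m j := by
        rw [← Finset.sum_add_distrib]
        refine Finset.sum_congr rfl fun j _ => ?_
        rw [show j+2 = (j+1)+1 from rfl, Nat.choose_succ_succ (j+1) e]
        push_cast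
        ring
      rw [hsplit, ih (e+1), ih e]
      have hE : ((e:ℚ)+1) ≠ 0 := by positivity
      have hF : ((e ! : ℕ):ℚ) ≠ 0 := by exact_mod_cast e.factorial_ne_zero
      have hfac : (((e+1)! : ℕ) : ℚ) = ((e:ℚ)+1) * (e ! : ℚ) := by
        push_cast [Nat.factorial_succ]; ring
      have hk2 : (((m:ℚ)+1)+1) * lc (m+1+1) (e+1)
          = ((m:ℚ)+1)*lc (m+1) (e+1) - ((e:ℚ)+1)*lc (m+1) e := by
        have h := key2 (e+1) (m+1)
        push_cast at h
        simpa using h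
      have hSe : (∑ i ∈ range (m+1), lc i e)
          = -(((m:ℚ)+1) * lc (m+1) (e+1)) / ((e:ℚ)+1) := by
        rw [eq_div_iff hE]
        linear_combination key1 e m
      rw [Finset.sum_range_succ (fun i => lc i (e+1)) (m+1)]
      push_cast
      rw [hfac, hk2, hSe]
      field_simp
      ring

noncomputable def F (d : ℕ) : PowerSeries ℚ := PowerSeries.exp ℚ * logOneSub ^ d * II

lemma coeff_F_zero {n d : ℕ} (h : n < d) : PowerSeries.coeff n (F d) = 0 := by
  have hdvd : (X : PowerSeries ℚ)^d ∣ F d :=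
    ((pow_dvd_pow_of_dvd X_dvd_log d).mul_left (PowerSeries.exp ℚ)).mul_right II
  exact PowerSeries.X_pow_dvd_iff.mp hdvd n h

lemma hD (d : ℕ) : d⁄dX ℚ (F d) = F d + (PowerSeries.exp ℚ * II) *
    (II * (logOneSub^d - PowerSeries.C (d:ℚ) * logOneSub^(d-1))) := by
  unfold F
  rw [Derivation.leibniz, Derivation.leibniz, deriv_II, deriv_exp', deriv_pow_log]
  simp only [smul_eq_mul]
  ring

lemma coeff_mul_congr {U B1 B2 : PowerSeries ℚ} {n : ℕ}
    (h : ∀ m ≤ n, PowerSeries.coeff m B1 = PowerSeries.coeff m B2) :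
    PowerSeries.coeff n (U * B1) = PowerSeries.coeff n (U * B2) := by
  rw [PowerSeries.coeff_mul, PowerSeries.coeff_mul]
  refine Finset.sum_congr rfl fun p hp => ?_
  rw [Finset.HasAntidiagonal.mem_antidiagonal] at hp
  rw [h p.2 (by omega)]

lemma hB (d n : ℕ) : ∀ m ≤ n,
    PowerSeries.coeff m (PowerSeries.C ((-1)^d/(d ! : ℚ)) *
      (II * (logOneSub^d - PowerSeries.C (d:ℚ) * logOneSub^(d-1))))
    = PowerSeries.coeff m (∑ j ∈ range (n+1),
        PowerSeries.C (((j+1).choose d : ℚ) * ((-1)^j/(j ! : ℚ))) * logOneSub ^ j) := by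
  intro m hm
  have hL : PowerSeries.coeff m (PowerSeries.C ((-1)^d/(d ! : ℚ)) *
      (II * (logOneSub^d - PowerSeries.C (d:ℚ) * logOneSub^(d-1))))
      = (-1)^d/(d ! : ℚ) * ((∑ i ∈ range (m+1), lc i d) + ((m:ℚ)+1) * lc (m+1) d) := by
    rw [PowerSeries.coeff_C_mul, show II * (logOneSub^d - PowerSeries.C (d:ℚ) * logOneSub^(d-1))
        = (logOneSub^d - PowerSeries.C (d:ℚ) * logOneSub^(d-1)) * II by ring, coeff_mul_II]
    have : ∀ i, PowerSeries.coeff i (logOneSub^d - PowerSeries.C (d:ℚ) * logOneSub^(d-1))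
        = lc i d - (d:ℚ) * lc i (d-1) := by
      intro i
      rw [map_sub, PowerSeries.coeff_C_mul]; rfl
    rw [Finset.sum_congr rfl fun i _ => this i, Finset.sum_sub_distrib, ← Finset.mul_sum,
      key1'' d m]
    ring
  have hR : PowerSeries.coeff m (∑ j ∈ range (n+1),
        PowerSeries.C (((j+1).choose d : ℚ) * ((-1)^j/(j ! : ℚ))) * logOneSub ^ j)
      = ∑ j ∈ range (m+1), ((j+1).choose d : ℚ) * ((-1)^j/(j ! : ℚ)) * lc m j := by
    rw [map_sum]
    have hsub : range (m+1) ⊆ range (n+1) := by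
      intro x hx; rw [Finset.mem_range] at *; omega
    rw [← Finset.sum_subset hsub]
    · exact Finset.sum_congr rfl fun j _ => by rw [PowerSeries.coeff_C_mul]; rfl
    · intro j hj hj2
      rw [Finset.mem_range] at hj hj2
      rw [PowerSeries.coeff_C_mul, show PowerSeries.coeff m (logOneSub ^ j) = lc m j from rfl,
        lc_eq_zero (by omega), mul_zero]
  rw [hL, hR, star m d]

lemma arec (d n : ℕ) :
    ((n+1)! : ℚ) * ((-1)^d/(d ! : ℚ)) * PowerSeries.coeff (n+1) (F d)
    = (n ! : ℚ) * ((-1)^d/(d ! : ℚ)) * PowerSeries.coeff n (F d)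
      + ∑ j ∈ Finset.Icc (d-1) n, ((j+1).choose d : ℚ) *
          ((n ! : ℚ) * ((-1)^j/(j ! : ℚ)) * PowerSeries.coeff n (F j)) := by
  have h1 : PowerSeries.coeff (n+1) (F d) * ((n:ℚ)+1) = PowerSeries.coeff n (d⁄dX ℚ (F d)) := by
    rw [PowerSeries.coeff_derivative]
  rw [hD d, map_add] at h1
  -- step: K_d * coeff n (expII * B1) = Σ c_j coeff n (F j)
  have h2 : PowerSeries.coeff n ((PowerSeries.exp ℚ * II) *
        (PowerSeries.C ((-1)^d/(d ! : ℚ)) *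
          (II * (logOneSub^d - PowerSeries.C (d:ℚ) * logOneSub^(d-1)))))
      = PowerSeries.coeff n ((PowerSeries.exp ℚ * II) * (∑ j ∈ range (n+1),
          PowerSeries.C (((j+1).choose d : ℚ) * ((-1)^j/(j ! : ℚ))) * logOneSub ^ j)) :=
    coeff_mul_congr (hB d n)
  have h3 : PowerSeries.coeff n ((PowerSeries.exp ℚ * II) * (∑ j ∈ range (n+1),
          PowerSeries.C (((j+1).choose d : ℚ) * ((-1)^j/(j ! : ℚ))) * logOneSub ^ j))
      = ∑ j ∈ range (n+1), ((j+1).choose d : ℚ) * ((-1)^j/(j ! : ℚ)) *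
          PowerSeries.coeff n (F j) := by
    rw [Finset.mul_sum, map_sum]
    refine Finset.sum_congr rfl fun j _ => ?_
    rw [show (PowerSeries.exp ℚ * II) *
        (PowerSeries.C (((j+1).choose d : ℚ) * ((-1)^j/(j ! : ℚ))) * logOneSub ^ j)
        = PowerSeries.C (((j+1).choose d : ℚ) * ((-1)^j/(j ! : ℚ))) * F j by unfold F; ring,
      PowerSeries.coeff_C_mul]
  have h4 : PowerSeries.coeff n ((PowerSeries.exp ℚ * II) *
        (PowerSeries.C ((-1)^d/(d ! : ℚ)) *
          (II * (logOneSub^d - PowerSeries.C (d:ℚ) * logOneSub^(d-1)))))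
      = ((-1)^d/(d ! : ℚ)) * PowerSeries.coeff n ((PowerSeries.exp ℚ * II) *
          (II * (logOneSub^d - PowerSeries.C (d:ℚ) * logOneSub^(d-1)))) := by
    rw [show (PowerSeries.exp ℚ * II) * (PowerSeries.C ((-1)^d/(d ! : ℚ)) *
          (II * (logOneSub^d - PowerSeries.C (d:ℚ) * logOneSub^(d-1))))
        = PowerSeries.C ((-1)^d/(d ! : ℚ)) * ((PowerSeries.exp ℚ * II) *
          (II * (logOneSub^d - PowerSeries.C (d:ℚ) * logOneSub^(d-1)))) by ring,
      PowerSeries.coeff_C_mul]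
  -- convert Icc sum to range sum
  have h5 : ∑ j ∈ Finset.Icc (d-1) n, ((j+1).choose d : ℚ) *
          ((n ! : ℚ) * ((-1)^j/(j ! : ℚ)) * PowerSeries.coeff n (F j))
      = ∑ j ∈ range (n+1), ((j+1).choose d : ℚ) *
          ((n ! : ℚ) * ((-1)^j/(j ! : ℚ)) * PowerSeries.coeff n (F j)) := by
    refine Finset.sum_subset (fun x hx => ?_) (fun j hj hj2 => ?_)
    · rw [Finset.mem_Icc] at hx; rw [Finset.mem_range]; omega
    · rw [Finset.mem_range] at hj
      rw [Finset.mem_Icc] at hj2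
      have : (j+1).choose d = 0 := Nat.choose_eq_zero_of_lt (by omega)
      rw [this]; push_cast; ring
  rw [h5]
  have hfn : ((n+1)! : ℚ) = ((n:ℚ)+1) * (n ! : ℚ) := by push_cast [Nat.factorial_succ]; ring
  rw [hfn]
  have h6 : ((-1)^d/(d ! : ℚ)) * PowerSeries.coeff n ((PowerSeries.exp ℚ * II) *
        (II * (logOneSub^d - PowerSeries.C (d:ℚ) * logOneSub^(d-1))))
      = ∑ j ∈ range (n+1), ((j+1).choose d : ℚ) * ((-1)^j/(j ! : ℚ)) *
          PowerSeries.coeff n (F j) := by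
    rw [← h4, h2, h3]
  have h7 : ∑ j ∈ range (n+1), ((j+1).choose d : ℚ) *
        ((n ! : ℚ) * ((-1)^j/(j ! : ℚ)) * PowerSeries.coeff n (F j))
      = (n ! : ℚ) * ∑ j ∈ range (n+1), ((j+1).choose d : ℚ) * ((-1)^j/(j ! : ℚ)) *
          PowerSeries.coeff n (F j) := by
    rw [Finset.mul_sum]
    exact Finset.sum_congr rfl fun j _ => by ring
  rw [h7]
  linear_combination ((n ! : ℚ) * ((-1)^d/(d ! : ℚ))) * h1 + (n ! : ℚ) * h6

theorem stmt_9 (N : ℕ → ℕ → ℕ) (h0 : N 0 0 = 1)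
    (hz : ∀ d n : ℕ, n < d → N d n = 0)
    (hrec : ∀ d n : ℕ, N d (n + 1) =
      N d n + ∑ j ∈ Finset.Icc (d - 1) n, (j + 1).choose d * N j n) :
    ∀ d n : ℕ, d ≤ n →
      (N d n : ℚ) = (n ! : ℚ) * ((-1 : ℚ) ^ d / (d ! : ℚ)) *
        PowerSeries.coeff n
          (PowerSeries.exp ℚ * logOneSub ^ d *
            PowerSeries.invOfUnit (1 - PowerSeries.X) 1) := by
  have main : ∀ n d : ℕ, (N d n : ℚ)
      = (n ! : ℚ) * ((-1 : ℚ)^d / (d ! : ℚ)) * PowerSeries.coeff n (F d) := by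
    intro n
    induction n with
    | zero =>
      intro d
      match d with
      | 0 =>
        rw [h0]
        have hc : PowerSeries.coeff 0 (F 0) = 1 := by
          simp [F, II, PowerSeries.coeff_zero_eq_constantCoeff, PowerSeries.constantCoeff_exp]
        rw [hc]
        norm_num
      | e+1 =>
        rw [hz (e+1) 0 (Nat.succ_pos e), coeff_F_zero (Nat.succ_pos e)]
        norm_num
    | succ n ihn =>
      intro d
      rw [hrec d n]
      push_cast
      have hsum : ∑ j ∈ Finset.Icc (d-1) n, ((j+1).choose d : ℚ) * (N j n : ℚ)
          = ∑ j ∈ Finset.Icc (d-1) n, ((j+1).choose d : ℚ) *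
              ((n ! : ℚ) * ((-1 : ℚ)^j/(j ! : ℚ)) * PowerSeries.coeff n (F j)) :=
        Finset.sum_congr rfl fun j _ => by rw [ihn j]
      rw [ihn d, hsum]
      exact (arec d n).symm
  intro d n _
  rw [invOfUnit_eq]
  exact main n d

end DSCProof
end

section
/- Fix d≥0. As n→∞, N_d(n)/(n!·(ln n)^d) → e/d!, where N_d(n) is the number of d-simplices at generation n of the DSC model. -/
open Nat Filter Topology

namespace DSCaux
open Finset

def S (N : ℕ → ℕ → ℕ) (d n : ℕ) : ℕ := ∑ j ∈ Finset.range (n+1), (j+1).choose d * N j n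
def T (N : ℕ → ℕ → ℕ) : ℕ → ℕ → ℕ
  | 0, _ => 0
  | e+1, n => N e n
def ST (N : ℕ → ℕ → ℕ) : ℕ → ℕ → ℕ
  | 0, _ => 0
  | e+1, n => S N e n
def Dd (N : ℕ → ℕ → ℕ) (d m : ℕ) : ℕ :=
  (N d 1 - N d 0) + ∑ k ∈ Finset.range m, T N d (k+1)

variable {N : ℕ → ℕ → ℕ}
lemma hrec' (hrec : ∀ d n : ℕ, N d (n + 1) =
      N d n + ∑ j ∈ Finset.Icc (d - 1) n, (j + 1).choose d * N j n)
    (d n : ℕ) : N d (n+1) = N d n + S N d n := by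
  rw [hrec d n, S]
  congr 1
  refine Finset.sum_subset ?_ ?_
  · intro j hj
    simp only [Finset.mem_Icc] at hj
    simp only [Finset.mem_range]
    omega
  · intro j hj hj'
    simp only [Finset.mem_range] at hj
    simp only [Finset.mem_Icc] at hj'
    have : j + 1 < d := by omega
    simp [Nat.choose_eq_zero_of_lt this]

lemma Stop2 (n : ℕ) : S N (n+2) n = 0 := by
  rw [S]
  refine Finset.sum_eq_zero fun j hj => ?_
  simp only [Finset.mem_range] at hj
  have : j + 1 < n + 2 := by omega
  simp [Nat.choose_eq_zero_of_lt this]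

lemma dagger (hz : ∀ d n : ℕ, n < d → N d n = 0)
    (hrec : ∀ d n : ℕ, N d (n + 1) =
      N d n + ∑ j ∈ Finset.Icc (d - 1) n, (j + 1).choose d * N j n)
    (d n : ℕ) :
    S N d (n+1) = S N d n + ∑ j ∈ Finset.range (n+2), (j+1).choose d * S N j n := by
  have : S N d (n+1) = ∑ j ∈ Finset.range (n+2), ((j+1).choose d * N j n + (j+1).choose d * S N j n) := by
    rw [S]
    refine Finset.sum_congr rfl fun j _ => ?_
    rw [hrec' hrec j n, mul_add]
  rw [this, Finset.sum_add_distrib]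
  congr 1
  rw [Finset.sum_range_succ, hz (n+1) n (by omega), mul_zero, add_zero, S]

lemma Tsum (d n : ℕ) :
    ∑ j ∈ Finset.range (n+3), (j+1).choose d * T N j (n+1)
      = S N d (n+1) + ST N d (n+1) := by
  rw [Finset.sum_range_succ']
  simp only [T]
  rw [mul_zero, add_zero]
  match d with
  | 0 =>
    simp only [ST, Nat.choose_zero_right, one_mul, add_zero, S]
  | e+1 =>
    simp only [ST, S]
    rw [← Finset.sum_add_distrib]
    refine Finset.sum_congr rfl fun i _ => ?_
    rw [show i + 1 + 1 = i + 2 by omega, Nat.choose_succ_succ (i+1) e, add_mul]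
    ring
lemma claimC (h0 : N 0 0 = 1) (hz : ∀ d n : ℕ, n < d → N d n = 0)
    (hrec : ∀ d n : ℕ, N d (n + 1) =
      N d n + ∑ j ∈ Finset.Icc (d - 1) n, (j + 1).choose d * N j n) :
    ∀ n d, S N d (n+1) = N d (n+1) + (n+1) * S N d n + T N d (n+1) := by
  intro n
  induction n with
  | zero =>
    intro d
    have hN01 : N 0 1 = 2 := by
      rw [hrec' hrec 0 0, h0, S]
      simp [h0]
    have hN11 : N 1 1 = 1 := by
      rw [hrec' hrec 1 0, hz 1 0 (by omega), S]
      simp [h0]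
    have hS0 : ∀ d, S N d 0 = Nat.choose 1 d := by
      intro d; rw [S]; simp [h0]
    have hS1 : ∀ d, S N d 1 = Nat.choose 1 d * N 0 1 + Nat.choose 2 d * N 1 1 := by
      intro d; rw [S]; simp [Finset.sum_range_succ]
    match d with
    | 0 => simp [hS1, hS0, hN01, hN11, T]
    | 1 => simp [hS1, hS0, hN01, hN11, T]
    | 2 => simp [hS1, hS0, hN01, hN11, T, hz 2 1 (by omega)]
    | e+3 =>
      rw [hS1, hS0, hz (e+3) 1 (by omega)]
      have h1 : Nat.choose 1 (e+3) = 0 := Nat.choose_eq_zero_of_lt (by omega)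
      have h2 : Nat.choose 2 (e+3) = 0 := Nat.choose_eq_zero_of_lt (by omega)
      simp [h1, h2, T, hz (e+2) 1 (by omega)]
  | succ n ih =>
    intro d
    -- expand dagger at n+1
    have h1 := dagger hz hrec d (n+1)
    have e1 : ∑ j ∈ Finset.range (n+3), (j+1).choose d * N j (n+1) = S N d (n+1) := by
      rw [Finset.sum_range_succ, hz (n+2) (n+1) (by omega), mul_zero, add_zero, S]
    have e2 : ∑ j ∈ Finset.range (n+3), (n+1) * ((j+1).choose d * S N j n)
        = (n+1) * ∑ j ∈ Finset.range (n+2), (j+1).choose d * S N j n := by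
      rw [← Finset.mul_sum, Finset.sum_range_succ, Stop2 n, mul_zero, add_zero]
    have hexp : ∑ j ∈ Finset.range (n+3), (j+1).choose d * S N j (n+1)
        = S N d (n+1) + (n+1) * (∑ j ∈ Finset.range (n+2), (j+1).choose d * S N j n)
          + (S N d (n+1) + ST N d (n+1)) := by
      have : ∀ j, (j+1).choose d * S N j (n+1)
          = (j+1).choose d * N j (n+1) + (n+1) * ((j+1).choose d * S N j n)
            + (j+1).choose d * T N j (n+1) := by
        intro j
        rw [ih j]; ring
      rw [Finset.sum_congr rfl (fun j _ => this j), Finset.sum_add_distrib,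
        Finset.sum_add_distrib, Tsum (N := N) d n, e1, e2]
    rw [hexp] at h1
    -- now pure arithmetic
    have h2 := dagger hz hrec d n
    have h3 := ih d
    have h4 := hrec' hrec d (n+1)
    have h5 : T N d (n+2) = T N d (n+1) + ST N d (n+1) := by
      match d with
      | 0 => simp [T, ST]
      | e+1 => simpa [T, ST] using hrec' hrec e (n+1)
    set B := ∑ j ∈ Finset.range (n+2), (j+1).choose d * S N j n with hB
    zify at h1 h2 h3 h4 h5 ⊢
    linear_combination h1 - ((n : ℤ)+1) * h2 + h3 - h4 - h5

lemma KEY (h0 : N 0 0 = 1) (hz : ∀ d n : ℕ, n < d → N d n = 0)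
    (hrec : ∀ d n : ℕ, N d (n + 1) =
      N d n + ∑ j ∈ Finset.Icc (d - 1) n, (j + 1).choose d * N j n)
    (d n : ℕ) :
    N d (n+2) + (n+1) * N d n = (n+3) * N d (n+1) + T N d (n+1) := by
  have h1 := claimC h0 hz hrec n d
  have h2 := hrec' hrec d (n+1)
  have h3 := hrec' hrec d n
  zify at h1 h2 h3 ⊢
  linear_combination h2 + h1 - ((n:ℤ)+1) * h3

lemma mono (h0 : N 0 0 = 1) (hz : ∀ d n : ℕ, n < d → N d n = 0)
    (hrec : ∀ d n : ℕ, N d (n + 1) =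
      N d n + ∑ j ∈ Finset.Icc (d - 1) n, (j + 1).choose d * N j n)
    (d : ℕ) : ∀ m, (m+1) * N d m ≤ N d (m+1) := by
  intro m
  induction m with
  | zero => rw [hrec' hrec d 0]; omega
  | succ m ih =>
    have hK := KEY h0 hz hrec d m
    have ht : 0 ≤ T N d (m+1) := Nat.zero_le _
    zify at hK ih ⊢
    nlinarith [hK, ih]


lemma Dlemma (h0 : N 0 0 = 1) (hz : ∀ d n : ℕ, n < d → N d n = 0)
    (hrec : ∀ d n : ℕ, N d (n + 1) =
      N d n + ∑ j ∈ Finset.Icc (d - 1) n, (j + 1).choose d * N j n)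
    (d : ℕ) : ∀ m, N d (m+1) = (m+1) * N d m + Dd N d m := by
  intro m
  induction m with
  | zero =>
    have h : N d 1 = N d 0 + S N d 0 := hrec' hrec d 0
    simp only [Dd, Finset.range_zero, Finset.sum_empty, add_zero, one_mul, Nat.zero_add]
    omega
  | succ m ih =>
    have hK := KEY h0 hz hrec d m
    have hD : Dd N d (m+1) = Dd N d m + T N d (m+1) := by
      rw [Dd, Dd, Finset.sum_range_succ]; ring
    zify at hK ih hD ⊢
    linear_combination hK + ih - hD

lemma sum_fact_le : ∀ m : ℕ, ∑ k ∈ Finset.range m, (k+1)! ≤ 2 * m ! := by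
  intro m
  induction m with
  | zero => simp
  | succ m ih =>
    cases m with
    | zero => decide
    | succ p =>
      rw [Finset.sum_range_succ]
      have h2 : 2 * (p+1)! ≤ (p+2)! := by
        have : (p+2)! = (p+2) * (p+1)! := Nat.factorial_succ (p+1)
        rw [this]
        exact Nat.mul_le_mul_right _ (by omega)
      calc ∑ k ∈ Finset.range (p+1), (k+1)! + (p+2)! ≤ 2 * (p+1)! + (p+2)! :=
            Nat.add_le_add_right ih _
        _ ≤ (p+2)! + (p+2)! := Nat.add_le_add_right h2 _
        _ = 2 * (p+2)! := (Nat.two_mul _).symm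

lemma stolz {u v : ℕ → ℝ} {L : ℝ} (hv_top : Tendsto v atTop atTop)
    (hv_mono : ∀ᶠ m in atTop, v m < v (m + 1))
    (hq : Tendsto (fun m => (u (m + 1) - u m) / (v (m + 1) - v m)) atTop (𝓝 L)) :
    Tendsto (fun n => u n / v n) atTop (𝓝 L) := by
  rw [Metric.tendsto_atTop] at hq ⊢
  intro ε hε
  obtain ⟨M₀, hM₀⟩ := hq (ε/3) (by positivity)
  obtain ⟨M₁, hM₁⟩ := eventually_atTop.1 hv_mono
  obtain ⟨M₂, hM₂⟩ := eventually_atTop.1 (hv_top.eventually_gt_atTop 0)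
  set M := max M₀ (max M₁ M₂) with hM
  have hMle : ∀ m, M ≤ m → v m < v (m+1) := fun m hm =>
    hM₁ m (le_trans (le_trans (le_max_left _ _) (le_max_right _ _)) hm)
  have hvpos : ∀ m, M ≤ m → 0 < v m := fun m hm =>
    hM₂ m (le_trans (le_trans (le_max_right _ _) (le_max_right _ _)) hm)
  have key : ∀ m, M ≤ m → |u (m+1) - u m - L * (v (m+1) - v m)| ≤ ε/3 * (v (m+1) - v m) := by
    intro m hm
    have h1 : 0 < v (m+1) - v m := sub_pos.2 (hMle m hm)
    have h2 := hM₀ m (le_trans (le_max_left _ _) hm)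
    rw [Real.dist_eq] at h2
    have heq : u (m+1) - u m - L * (v (m+1) - v m)
        = ((u (m+1) - u m) / (v (m+1) - v m) - L) * (v (m+1) - v m) := by
      field_simp
    rw [heq, abs_mul, abs_of_pos h1]
    exact mul_le_mul_of_nonneg_right h2.le h1.le
  have tel : ∀ n, M ≤ n → |u n - u M - L * (v n - v M)| ≤ ε/3 * (v n - v M) := by
    intro n hn
    induction n, hn using Nat.le_induction with
    | base => simp
    | succ n hn ih =>
      have h1 := key n hn
      have heq : u (n+1) - u M - L * (v (n+1) - v M)
          = (u n - u M - L * (v n - v M)) + (u (n+1) - u n - L * (v (n+1) - v n)) := by ring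
      rw [heq]
      calc |_ + _| ≤ |u n - u M - L * (v n - v M)| + |u (n+1) - u n - L * (v (n+1) - v n)| :=
            abs_add_le _ _
        _ ≤ ε/3 * (v n - v M) + ε/3 * (v (n+1) - v n) := add_le_add ih h1
        _ = ε/3 * (v (n+1) - v M) := by ring
  set C : ℝ := |u M - L * v M| + ε/3 * |v M| with hC
  have hC0 : 0 ≤ C := by positivity
  obtain ⟨N₀, hN₀⟩ := eventually_atTop.1 (hv_top.eventually_ge_atTop (3*C/ε + 1))
  refine ⟨max M N₀, fun n hn => ?_⟩
  have hnM : M ≤ n := le_trans (le_max_left _ _) hn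
  have hvn : 3*C/ε + 1 ≤ v n := hN₀ n (le_trans (le_max_right _ _) hn)
  have hvnpos : 0 < v n := hvpos n hnM
  have h4 := tel n hnM
  have h5 : |u n - L * v n| ≤ C + ε/3 * v n := by
    have heq : u n - L * v n = (u n - u M - L * (v n - v M)) + (u M - L * v M) := by ring
    rw [heq]
    have h6 : v n - v M ≤ v n + |v M| := by
      have := neg_abs_le (v M); linarith
    calc |_ + _| ≤ |u n - u M - L * (v n - v M)| + |u M - L * v M| := abs_add_le _ _
      _ ≤ ε/3 * (v n - v M) + |u M - L * v M| := add_le_add h4 le_rfl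
      _ ≤ ε/3 * (v n + |v M|) + |u M - L * v M| := by
          have : ε/3 * (v n - v M) ≤ ε/3 * (v n + |v M|) :=
            mul_le_mul_of_nonneg_left h6 (by positivity)
          linarith
      _ = C + ε/3 * v n := by rw [hC]; ring
  rw [Real.dist_eq]
  have heq2 : u n / v n - L = (u n - L * v n) / v n := by
    field_simp
  rw [heq2, abs_div, abs_of_pos hvnpos]
  have hCvn : C / v n ≤ ε/3 := by
    have h7 : C / v n ≤ C / (3*C/ε + 1) := by
      apply div_le_div_of_nonneg_left hC0 (by positivity) hvn
    have h8 : C / (3*C/ε + 1) ≤ ε/3 := by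
      rw [div_le_iff₀ (by positivity)]
      have : ε/3 * (3*C/ε + 1) = C + ε/3 := by
        field_simp
      rw [this]; linarith
    linarith
  calc |u n - L * v n| / v n ≤ (C + ε/3 * v n) / v n := by gcongr
      _ = C / v n + ε/3 := by
        field_simp
      _ ≤ ε/3 + ε/3 := by linarith
      _ < ε := by linarith

lemma logd_lb {m : ℕ} (hm : 1 ≤ m) :
    1/((m:ℝ)+1) ≤ Real.log ((m:ℝ)+1) - Real.log m := by
  have hm0 : (0:ℝ) < m := by exact_mod_cast hm
  have hm1 : (0:ℝ) < (m:ℝ)+1 := by linarith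
  have h := Real.log_le_sub_one_of_pos (show (0:ℝ) < (m:ℝ)/((m:ℝ)+1) by positivity)
  rw [Real.log_div hm0.ne' hm1.ne'] at h
  have h2 : (m:ℝ)/((m:ℝ)+1) - 1 = -(1/((m:ℝ)+1)) := by field_simp; ring
  linarith

lemma logd_ub {m : ℕ} (hm : 1 ≤ m) :
    Real.log ((m:ℝ)+1) - Real.log m ≤ 1/(m:ℝ) := by
  have hm0 : (0:ℝ) < m := by exact_mod_cast hm
  have hm1 : (0:ℝ) < (m:ℝ)+1 := by linarith
  have h := Real.log_le_sub_one_of_pos (show (0:ℝ) < ((m:ℝ)+1)/m by positivity)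
  rw [Real.log_div hm1.ne' hm0.ne'] at h
  have h2 : ((m:ℝ)+1)/m - 1 = 1/m := by field_simp; ring
  linarith

lemma mdelta : Tendsto (fun m : ℕ => ((m:ℝ)+1) * (Real.log ((m:ℝ)+1) - Real.log m))
    atTop (𝓝 1) := by
  have hup : Tendsto (fun m : ℕ => 1 + 1/(m:ℝ)) atTop (𝓝 1) := by
    have := tendsto_const_nhds (x := (1:ℝ)) (f := atTop (α := ℕ))
    simpa using this.add tendsto_one_div_atTop_nhds_zero_nat
  refine tendsto_of_tendsto_of_tendsto_of_le_of_le' tendsto_const_nhds hup ?_ ?_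
  · filter_upwards [eventually_ge_atTop 1] with m hm
    have h := logd_lb hm
    have hm1 : (0:ℝ) < (m:ℝ)+1 := by positivity
    calc (1:ℝ) = ((m:ℝ)+1) * (1/((m:ℝ)+1)) := by field_simp
      _ ≤ ((m:ℝ)+1) * (Real.log ((m:ℝ)+1) - Real.log m) :=
          mul_le_mul_of_nonneg_left h hm1.le
  · filter_upwards [eventually_ge_atTop 1] with m hm
    have h := logd_ub hm
    have hm0 : (0:ℝ) < m := by exact_mod_cast hm
    have hm1 : (0:ℝ) < (m:ℝ)+1 := by positivity
    calc ((m:ℝ)+1) * (Real.log ((m:ℝ)+1) - Real.log m) ≤ ((m:ℝ)+1) * (1/(m:ℝ)) :=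
          mul_le_mul_of_nonneg_left h hm1.le
      _ = 1 + 1/(m:ℝ) := by field_simp

lemma aux_div_sq : Tendsto (fun m : ℕ => ((m:ℝ)+1)/(m:ℝ)^2) atTop (𝓝 0) := by
  have hg : Tendsto (fun m : ℕ => 2 * (1/(m:ℝ))) atTop (𝓝 0) := by
    have := tendsto_one_div_atTop_nhds_zero_nat.const_mul (2:ℝ)
    simpa using this
  refine squeeze_zero_norm' ?_ hg
  filter_upwards [eventually_ge_atTop 1] with m hm
  have hm0 : (0:ℝ) < m := by exact_mod_cast hm
  have hb : ((m:ℝ)+1)/(m:ℝ)^2 ≤ (2*(m:ℝ))/(m:ℝ)^2 := by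
    gcongr
    have : (1:ℝ) ≤ m := by exact_mod_cast hm
    linarith
  have he : (2*(m:ℝ))/(m:ℝ)^2 = 2 * (1/(m:ℝ)) := by
    rw [pow_two, mul_div_mul_right _ _ hm0.ne']
    rw [mul_one_div]
  rw [Real.norm_eq_abs, abs_of_nonneg (by positivity)]
  rw [← he]
  exact hb

lemma calcW (e : ℕ) :
    Tendsto (fun m : ℕ => ((m:ℝ)+1) * ((Real.log ((m:ℝ)+1))^(e+1) - (Real.log m)^(e+1))
      / (Real.log m)^e) atTop (𝓝 ((e:ℝ)+1)) := by
  have hident : ∀ m : ℕ,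
      ((m:ℝ)+1) * ((Real.log ((m:ℝ)+1))^(e+1) - (Real.log m)^(e+1)) / (Real.log m)^e
      = ∑ k ∈ Finset.range (e+1),
          (((m:ℝ)+1) * ((Real.log m)^k * (Real.log ((m:ℝ)+1) - Real.log m)^(e+1-k)
            * ((e+1).choose k)) / (Real.log m)^e) := by
    intro m
    rw [← Finset.sum_div, ← Finset.mul_sum]
    congr 2
    have hx : Real.log ((m:ℝ)+1) = Real.log m + (Real.log ((m:ℝ)+1) - Real.log m) := by ring
    rw [hx, add_pow, Finset.sum_range_succ]
    simp [Nat.choose_self]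
  have hterm : ∀ k ∈ Finset.range (e+1), Tendsto
      (fun m : ℕ => (((m:ℝ)+1) * ((Real.log m)^k * (Real.log ((m:ℝ)+1) - Real.log m)^(e+1-k)
            * ((e+1).choose k)) / (Real.log m)^e))
      atTop (𝓝 (if k = e then (e:ℝ)+1 else 0)) := by
    intro k hk
    rw [Finset.mem_range] at hk
    rcases eq_or_lt_of_le (Nat.lt_succ_iff.1 hk) with heq | hlt
    · subst heq
      simp only [if_pos rfl]
      have hm := mdelta
      have h2 : Tendsto (fun m : ℕ => ((k:ℝ)+1) * (((m:ℝ)+1) * (Real.log ((m:ℝ)+1) - Real.log m)))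
          atTop (𝓝 (((k:ℝ)+1) * 1)) := tendsto_const_nhds.mul hm
      rw [mul_one] at h2
      refine h2.congr' ?_
      filter_upwards [eventually_ge_atTop 2] with m hm2
      have hx : (0:ℝ) < Real.log m := by
        apply Real.log_pos
        exact_mod_cast by omega
      have hc : (((k+1).choose k : ℕ) : ℝ) = (k:ℝ)+1 := by
        rw [Nat.choose_succ_self_right]; push_cast; ring
      have h1 : k+1-k = 1 := by omega
      rw [h1, pow_one, hc]
      field_simp
    · simp only [if_neg hlt.ne]
      have hg : Tendsto (fun m : ℕ => (((e+1).choose k : ℕ):ℝ) * (((m:ℝ)+1)/(m:ℝ)^2))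
          atTop (𝓝 0) := by
        have := (tendsto_const_nhds (x := (((e+1).choose k : ℕ):ℝ))
            (f := atTop (α := ℕ))).mul aux_div_sq
        simpa using this
      refine squeeze_zero_norm' ?_ hg
      filter_upwards [eventually_ge_atTop 3] with m hm3
      have hm0 : (0:ℝ) < m := by exact_mod_cast (by omega : 0 < m)
      have hm1 : (1:ℝ) ≤ m := by exact_mod_cast (by omega : 1 ≤ m)
      have hx1 : (1:ℝ) ≤ Real.log m := by
        rw [Real.le_log_iff_exp_le hm0]
        calc Real.exp 1 ≤ 2.7182818286 := Real.exp_one_lt_d9.le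
          _ ≤ 3 := by norm_num
          _ ≤ (m:ℝ) := by exact_mod_cast hm3
      have hx0 : (0:ℝ) < Real.log m := lt_of_lt_of_le one_pos hx1
      have hδ0 : 0 ≤ Real.log ((m:ℝ)+1) - Real.log m := by
        have := logd_lb (show 1 ≤ m by omega)
        have : (0:ℝ) < 1/((m:ℝ)+1) := by positivity
        linarith [logd_lb (show 1 ≤ m by omega)]
      have hδub : Real.log ((m:ℝ)+1) - Real.log m ≤ 1/(m:ℝ) := logd_ub (by omega)
      have hδ1 : Real.log ((m:ℝ)+1) - Real.log m ≤ 1 := by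
        have : 1/(m:ℝ) ≤ 1 := by
          rw [div_le_one hm0]; exact hm1
        linarith
      set δ := Real.log ((m:ℝ)+1) - Real.log m with hδ
      set x := Real.log m with hxd
      have hterm_eq : ((m:ℝ)+1) * (x^k * δ^(e+1-k) * ((e+1).choose k)) / x^e
          = (((e+1).choose k : ℕ):ℝ) * (((m:ℝ)+1) * (δ^(e+1-k) * (x^k/x^e))) := by
        field_simp
      have hbound : ((m:ℝ)+1) * (x^k * δ^(e+1-k) * ((e+1).choose k)) / x^e
          ≤ (((e+1).choose k : ℕ):ℝ) * (((m:ℝ)+1)/(m:ℝ)^2) := by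
        rw [hterm_eq]
        have hxke : x^k/x^e ≤ 1 := by
          rw [div_le_one (by positivity)]
          exact pow_le_pow_right₀ hx1 (by omega)
        have hδpow : δ^(e+1-k) ≤ 1/(m:ℝ)^2 := by
          calc δ^(e+1-k) ≤ δ^2 :=
                pow_le_pow_of_le_one hδ0 hδ1 (by omega)
            _ ≤ (1/(m:ℝ))^2 := by
                apply pow_le_pow_left₀ hδ0 hδub
            _ = 1/(m:ℝ)^2 := by rw [div_pow, one_pow]
        calc (((e+1).choose k : ℕ):ℝ) * (((m:ℝ)+1) * (δ^(e+1-k) * (x^k/x^e)))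
            ≤ (((e+1).choose k : ℕ):ℝ) * (((m:ℝ)+1) * (1/(m:ℝ)^2 * 1)) := by
              apply mul_le_mul_of_nonneg_left _ (by positivity)
              apply mul_le_mul_of_nonneg_left _ (by positivity)
              apply mul_le_mul hδpow hxke (by positivity) (by positivity)
          _ = (((e+1).choose k : ℕ):ℝ) * (((m:ℝ)+1)/(m:ℝ)^2) := by ring
      have hnonneg : 0 ≤ ((m:ℝ)+1) * (x^k * δ^(e+1-k) * ((e+1).choose k)) / x^e := by
        positivity
      rw [Real.norm_eq_abs, abs_of_nonneg hnonneg]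
      exact hbound

  have hsum := tendsto_finset_sum (Finset.range (e+1)) hterm
  have hval : ∑ k ∈ Finset.range (e+1), (if k = e then (e:ℝ)+1 else 0) = (e:ℝ)+1 := by
    rw [Finset.sum_ite_eq' (Finset.range (e+1)) e]
    simp
  rw [hval] at hsum
  exact hsum.congr (fun m => (hident m).symm)

lemma sum_asymp {u : ℕ → ℝ} {e : ℕ} {L : ℝ}
    (h : Tendsto (fun m : ℕ => ((m:ℝ)+1) * (u (m+1) - u m) / (Real.log m)^e) atTop (𝓝 L)) :
    Tendsto (fun n : ℕ => u n / (Real.log n)^(e+1)) atTop (𝓝 (L/((e:ℝ)+1))) := by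
  have hlog : Tendsto (fun n : ℕ => Real.log n) atTop atTop :=
    Real.tendsto_log_atTop.comp tendsto_natCast_atTop_atTop
  refine stolz ((tendsto_pow_atTop (Nat.succ_ne_zero e)).comp hlog) ?_ ?_
  · filter_upwards [eventually_ge_atTop 1] with m hm
    have hm0 : (0:ℝ) < m := by exact_mod_cast hm
    have h2 : Real.log m < Real.log (m+1) := by
      apply Real.log_lt_log hm0
      push_cast
      linarith
    have h3 : (0:ℝ) ≤ Real.log m := Real.log_natCast_nonneg m
    have h4 := pow_lt_pow_left₀ h2 h3 (n := e+1) (by omega)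
    have hc : ((m+1:ℕ):ℝ) = (m:ℝ)+1 := by push_cast; ring
    rw [hc]
    exact h4
  · have hW := calcW e
    have hWinv := hW.inv₀ (by
      have : (0:ℝ) < (e:ℝ)+1 := by positivity
      exact this.ne')
    have hprod := h.mul hWinv
    have heqL : L * ((e:ℝ)+1)⁻¹ = L/((e:ℝ)+1) := (div_eq_mul_inv L _).symm
    rw [heqL] at hprod
    refine hprod.congr' ?_
    filter_upwards [eventually_ge_atTop 2] with m hm
    have hm1 : (1:ℝ) < m := by exact_mod_cast hm
    have hx : (0:ℝ) < Real.log m := Real.log_pos hm1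
    have hxs : Real.log m < Real.log (m+1) := by
      apply Real.log_lt_log (by positivity)
      push_cast; linarith
    have hw : (0:ℝ) < (Real.log ((m:ℝ)+1))^(e+1) - (Real.log m)^(e+1) := by
      have := pow_lt_pow_left₀ hxs hx.le (n := e+1) (by omega)
      linarith
    have hcast : Real.log ((m+1:ℕ):ℝ) = Real.log ((m:ℝ)+1) := by push_cast; rfl
    rw [hcast]
    have hm0 : (0:ℝ) < (m:ℝ)+1 := by positivity
    field_simp
end DSCaux

open DSCaux in
theorem stmt_10 (N : ℕ → ℕ → ℕ) (h0 : N 0 0 = 1)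
    (hz : ∀ d n : ℕ, n < d → N d n = 0)
    (hrec : ∀ d n : ℕ, N d (n + 1) =
      N d n + ∑ j ∈ Finset.Icc (d - 1) n, (j + 1).choose d * N j n)
    (d : ℕ) :
    Tendsto (fun n : ℕ => (N d n : ℝ) / ((n ! : ℝ) * (Real.log n) ^ d))
      atTop (𝓝 (Real.exp 1 / (d ! : ℝ))) := by
  have hN01 : N 0 1 = 2 := by
    rw [hrec' hrec 0 0, h0, S]
    simp [h0]
  induction d with
  | zero =>
    -- u n = N 0 n / n! = ∑_{k ≤ n} 1/k!
    have hD : ∀ m, Dd N 0 m = 1 := by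
      intro m
      rw [Dd, hN01, h0]
      simp [T]
    have hstep : ∀ m, N 0 (m+1) = (m+1) * N 0 m + 1 := by
      intro m
      rw [Dlemma h0 hz hrec 0 m, hD m]
    have hu : ∀ n, (N 0 n : ℝ) / (n ! : ℝ) = ∑ k ∈ Finset.range (n+1), 1/(k ! : ℝ) := by
      intro n
      induction n with
      | zero => simp [h0]
      | succ n ih =>
        rw [Finset.sum_range_succ, ← ih, hstep n]
        have hf : ((n+1)! : ℝ) = ((n:ℝ)+1) * (n ! : ℝ) := by
          rw [Nat.factorial_succ]; push_cast; ring
        have hfn : (n ! : ℝ) ≠ 0 := by positivity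
        have hfn1 : ((n:ℝ)+1) ≠ 0 := by positivity
        push_cast
        rw [hf]
        field_simp
    have hexp : Tendsto (fun n : ℕ => ∑ k ∈ Finset.range n, 1/(k ! : ℝ)) atTop
        (𝓝 (Real.exp 1)) := by
      have hs : HasSum (fun k : ℕ => (1:ℝ)^k / (k ! : ℝ)) (Real.exp 1) := by
        rw [Real.exp_eq_exp_ℝ]
        exact NormedSpace.expSeries_div_hasSum_exp (1:ℝ)
      have := hs.tendsto_sum_nat
      refine this.congr fun n => ?_
      exact Finset.sum_congr rfl fun k _ => by rw [one_pow]
    have hshift := hexp.comp (tendsto_add_atTop_nat 1)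
    have hgoal : Tendsto (fun n : ℕ => (N 0 n : ℝ) / (n ! : ℝ)) atTop (𝓝 (Real.exp 1)) := by
      refine hshift.congr fun n => ?_
      simp only [Function.comp]
      rw [← hu n]
    have h1 : Real.exp 1 / ((0:ℕ)! : ℝ) = Real.exp 1 := by norm_num
    rw [h1]
    refine hgoal.congr fun n => ?_
    rw [pow_zero, mul_one]
  | succ e ih =>
    set L : ℝ := Real.exp 1 / (e ! : ℝ) with hL
    set ae : ℕ → ℝ := fun n => (N e n : ℝ) / (n ! : ℝ) with hae
    set u : ℕ → ℝ := fun n => (N (e+1) n : ℝ) / (n ! : ℝ) with huu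
    have ih' : Tendsto (fun n : ℕ => ae n / (Real.log n)^e) atTop (𝓝 L) := by
      refine ih.congr fun n => ?_
      show (N e n : ℝ) / ((n ! : ℝ) * (Real.log n)^e) = ((N e n : ℝ)/(n ! : ℝ)) / (Real.log n)^e
      rw [div_div]
    have haemono : Monotone ae := by
      apply monotone_nat_of_le_succ
      intro m
      have h := mono h0 hz hrec e m
      show (N e m : ℝ) / (m ! : ℝ) ≤ (N e (m+1) : ℝ) / ((m+1)! : ℝ)
      have hfn : (0:ℝ) < (m ! : ℝ) := by positivity
      have hfn1 : (0:ℝ) < ((m+1)! : ℝ) := by positivity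
      rw [div_le_div_iff₀ hfn hfn1]
      have hf : ((m+1)! : ℝ) = ((m:ℝ)+1) * (m ! : ℝ) := by
        rw [Nat.factorial_succ]; push_cast; ring
      rw [hf]
      have hc : ((m:ℝ)+1) * (N e m : ℝ) ≤ (N e (m+1) : ℝ) := by exact_mod_cast h
      calc (N e m : ℝ) * (((m:ℝ)+1) * (m ! : ℝ)) = (((m:ℝ)+1) * (N e m : ℝ)) * (m ! : ℝ) := by ring
        _ ≤ (N e (m+1) : ℝ) * (m ! : ℝ) := mul_le_mul_of_nonneg_right hc hfn.le
    have haenonneg : ∀ m, 0 ≤ ae m := fun m => by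
      show (0:ℝ) ≤ (N e m : ℝ) / (m ! : ℝ)
      positivity
    set δ : ℕ → ℝ := fun m => (Dd N (e+1) m : ℝ) / ((m+1)! : ℝ) with hδd
    have hδeq : ∀ m, u (m+1) - u m = δ m := by
      intro m
      have h := Dlemma h0 hz hrec (e+1) m
      show (N (e+1) (m+1) : ℝ)/((m+1)! : ℝ) - (N (e+1) m : ℝ)/(m ! : ℝ)
        = (Dd N (e+1) m : ℝ)/((m+1)! : ℝ)
      have hf : ((m+1)! : ℝ) = ((m:ℝ)+1) * (m ! : ℝ) := by
        rw [Nat.factorial_succ]; push_cast; ring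
      have hcast : (N (e+1) (m+1) : ℝ) = ((m:ℝ)+1) * (N (e+1) m : ℝ) + (Dd N (e+1) m : ℝ) := by
        exact_mod_cast h
      rw [hcast, hf]
      have h1 : (m ! : ℝ) ≠ 0 := by positivity
      have h2 : ((m:ℝ)+1) ≠ 0 := by positivity
      field_simp
      ring
    have hδnonneg : ∀ m, 0 ≤ δ m := fun m => by
      show (0:ℝ) ≤ (Dd N (e+1) m : ℝ)/((m+1)! : ℝ)
      positivity
    have hDdrec : ∀ m, (Dd N (e+1) (m+1) : ℝ) = (Dd N (e+1) m : ℝ) + (N e (m+1) : ℝ) := by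
      intro m
      rw [Dd, Dd, Finset.sum_range_succ]
      push_cast [T]
      ring
    have hδrec : ∀ m : ℕ, ((m:ℝ)+2) * δ (m+1) = δ m + ae (m+1) := by
      intro m
      show ((m:ℝ)+2) * ((Dd N (e+1) (m+1) : ℝ) / ((m+1+1)! : ℝ))
        = (Dd N (e+1) m : ℝ)/((m+1)! : ℝ) + (N e (m+1) : ℝ)/((m+1)! : ℝ)
      have hf2 : ((m+1+1)! : ℝ) = ((m:ℝ)+2) * ((m+1)! : ℝ) := by
        rw [Nat.factorial_succ]; push_cast; ring
      have h1 : ((m+1)! : ℝ) ≠ 0 := by positivity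
      have h2 : ((m:ℝ)+2) ≠ 0 := by positivity
      rw [hf2, hDdrec m]
      field_simp
    -- bound on δ
    have hδbound : ∀ m : ℕ, δ m ≤ (Dd N (e+1) 0 : ℝ)/((m:ℝ)+1) + 2 * (ae m/((m:ℝ)+1)) := by
      intro m
      have hsplit : (Dd N (e+1) m : ℝ)
          = (Dd N (e+1) 0 : ℝ) + ∑ k ∈ Finset.range m, (N e (k+1) : ℝ) := by
        rw [Dd, Dd]
        push_cast [T]
        simp
      have hsum : ∑ k ∈ Finset.range m, (N e (k+1) : ℝ) ≤ ae m * (2 * (m ! : ℝ)) := by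
        have h1 : ∑ k ∈ Finset.range m, (N e (k+1) : ℝ)
            ≤ ∑ k ∈ Finset.range m, ae m * ((k+1)! : ℝ) := by
          apply Finset.sum_le_sum
          intro k hk
          rw [Finset.mem_range] at hk
          have hmono := haemono (show k+1 ≤ m by omega)
          have hfk : (0:ℝ) < ((k+1)! : ℝ) := by positivity
          have : (N e (k+1) : ℝ) = ae (k+1) * ((k+1)! : ℝ) :=
            (div_mul_cancel₀ _ hfk.ne').symm
          rw [this]
          exact mul_le_mul_of_nonneg_right hmono hfk.le
        have h2 : ∑ k ∈ Finset.range m, ae m * ((k+1)! : ℝ)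
            = ae m * ∑ k ∈ Finset.range m, ((k+1)! : ℝ) := by
          rw [Finset.mul_sum]
        have h3 : ∑ k ∈ Finset.range m, ((k+1)! : ℝ) ≤ 2 * (m ! : ℝ) := by
          have := sum_fact_le m
          exact_mod_cast this
        calc ∑ k ∈ Finset.range m, (N e (k+1) : ℝ) ≤ ae m * ∑ k ∈ Finset.range m, ((k+1)! : ℝ) := by
              rw [← h2]; exact h1
          _ ≤ ae m * (2 * (m ! : ℝ)) := mul_le_mul_of_nonneg_left h3 (haenonneg m)
      have hffac : ((m:ℝ)+1) ≤ ((m+1)! : ℝ) := by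
        exact_mod_cast Nat.self_le_factorial (m+1)
      have hfpos : (0:ℝ) < ((m+1)! : ℝ) := by positivity
      have hf : ((m+1)! : ℝ) = ((m:ℝ)+1) * (m ! : ℝ) := by
        rw [Nat.factorial_succ]; push_cast; ring
      have hb1 : (Dd N (e+1) m : ℝ) / ((m+1)! : ℝ)
          ≤ ((Dd N (e+1) 0 : ℝ) + ae m * (2 * (m ! : ℝ))) / ((m+1)! : ℝ) := by
        gcongr
        rw [hsplit]
        linarith [hsum]
      have hb2 : ((Dd N (e+1) 0 : ℝ) + ae m * (2 * (m ! : ℝ))) / ((m+1)! : ℝ)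
          ≤ (Dd N (e+1) 0 : ℝ)/((m:ℝ)+1) + 2 * (ae m/((m:ℝ)+1)) := by
        rw [_root_.add_div]
        have hb3 : (Dd N (e+1) 0 : ℝ) / ((m+1)! : ℝ) ≤ (Dd N (e+1) 0 : ℝ)/((m:ℝ)+1) := by
          apply div_le_div_of_nonneg_left (by positivity) (by positivity) hffac
        have hb4 : ae m * (2 * (m ! : ℝ)) / ((m+1)! : ℝ) = 2 * (ae m/((m:ℝ)+1)) := by
          rw [hf]
          have h1 : (m ! : ℝ) ≠ 0 := by positivity
          have h2 : ((m:ℝ)+1) ≠ 0 := by positivity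
          field_simp
        rw [hb4]
        linarith
      exact le_trans hb1 hb2
    -- limits
    have hxe : Tendsto (fun m : ℕ => (Real.log m)^e / ((m:ℝ)+1)) atTop (𝓝 0) := by
      have h := (Real.tendsto_pow_log_div_mul_add_atTop 1 1 e one_ne_zero).comp
        tendsto_natCast_atTop_atTop
      refine h.congr fun m => ?_
      simp only [Function.comp]
      rw [one_mul]
    have haediv : Tendsto (fun m : ℕ => ae m / ((m:ℝ)+1)) atTop (𝓝 0) := by
      have hprod := ih'.mul hxe
      rw [mul_zero] at hprod
      refine hprod.congr' ?_
      filter_upwards [eventually_ge_atTop 2] with m hm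
      have hx : (0:ℝ) < Real.log m := Real.log_pos (by exact_mod_cast (by omega : (1:ℕ) < m))
      have hxne : (Real.log m)^e ≠ 0 := by positivity
      have hmne : ((m:ℝ)+1) ≠ 0 := by positivity
      field_simp
    have hDd0div : Tendsto (fun m : ℕ => (Dd N (e+1) 0 : ℝ) / ((m:ℝ)+1)) atTop (𝓝 0) := by
      have h := tendsto_one_div_add_atTop_nhds_zero_nat.const_mul ((Dd N (e+1) 0 : ℕ) : ℝ)
      rw [mul_zero] at h
      refine h.congr fun m => ?_
      rw [mul_one_div]
    have hB : Tendsto (fun m : ℕ => (Dd N (e+1) 0 : ℝ)/((m:ℝ)+1) + 2 * (ae m/((m:ℝ)+1)))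
        atTop (𝓝 0) := by
      have := hDd0div.add (haediv.const_mul (2:ℝ))
      simpa using this
    have hδ0 : Tendsto δ atTop (𝓝 0) :=
      tendsto_of_tendsto_of_tendsto_of_le_of_le tendsto_const_nhds hB hδnonneg hδbound
    have hq1 : Tendsto (fun m : ℕ => δ m / (Real.log ((m+1 : ℕ) : ℝ))^e) atTop (𝓝 0) := by
      refine squeeze_zero_norm' ?_ hδ0
      filter_upwards [eventually_ge_atTop 2] with m hm
      have hm1 : (0:ℝ) < ((m+1 : ℕ) : ℝ) := by positivity
      have hx1 : (1:ℝ) ≤ Real.log ((m+1 : ℕ) : ℝ) := by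
        rw [Real.le_log_iff_exp_le hm1]
        calc Real.exp 1 ≤ 2.7182818286 := Real.exp_one_lt_d9.le
          _ ≤ 3 := by norm_num
          _ ≤ ((m+1 : ℕ) : ℝ) := by exact_mod_cast (by omega : 3 ≤ m+1)
      have hp : (1:ℝ) ≤ (Real.log ((m+1 : ℕ) : ℝ))^e := by
        calc (1:ℝ) = 1^e := (one_pow e).symm
          _ ≤ (Real.log ((m+1 : ℕ) : ℝ))^e := pow_le_pow_left₀ zero_le_one hx1 e
      rw [Real.norm_eq_abs, abs_of_nonneg (div_nonneg (hδnonneg m) (by positivity))]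
      exact div_le_self (hδnonneg m) hp
    have ihshift := ih'.comp (tendsto_add_atTop_nat 1)
    have hsum2 : Tendsto (fun m : ℕ => (δ m + ae (m+1)) / (Real.log ((m+1 : ℕ) : ℝ))^e)
        atTop (𝓝 (0 + L)) := by
      refine (hq1.add ihshift).congr fun m => ?_
      simp only [Function.comp]
      exact (_root_.add_div _ _ _).symm
    rw [zero_add] at hsum2
    have hq : Tendsto (fun m : ℕ => ((m:ℝ)+1) * (u (m+1) - u m) / (Real.log m)^e)
        atTop (𝓝 L) := by
      rw [← tendsto_add_atTop_iff_nat 1]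
      refine hsum2.congr fun m => ?_
      rw [hδeq (m+1), ← hδrec m]
      push_cast
      try ring
    have happ := sum_asymp hq
    have hLval : L / ((e:ℝ)+1) = Real.exp 1 / (((e+1)! : ℕ) : ℝ) := by
      rw [hL]
      have hfe : (((e+1)! : ℕ) : ℝ) = ((e:ℝ)+1) * (e ! : ℝ) := by
        rw [Nat.factorial_succ]; push_cast; ring
      rw [hfe, div_div]
      ring_nf
    rw [show Real.exp 1 / (((e+1)! : ℕ) : ℝ) = L / ((e:ℝ)+1) from hLval.symm]
    refine happ.congr fun n => ?_
    show u n / (Real.log n)^(e+1) = (N (e+1) n : ℝ)/((n ! : ℝ) * (Real.log n)^(e+1))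
    rw [div_div]
end

section
/- Define M(n) (the maximal vertex degree of the DSC complex of generation n) by M(1)=1 and M(n+1)=M(n)+N_0(n), where N_0(n)=∑_{k=0}^n n!/k!. Then e^x·ln(1−x) = −∑_{n≥1} M(n)·x^n/n! as formal power series, i.e., M(n)/n! equals minus the coefficient of x^n in e^x·ln(1−x). -/
open Nat

/-- Auxiliary: closed form `T n = ∑_{j=1}^n C(n,j)·(j-1)!`. -/
private def Taux (n : ℕ) : ℕ := ∑ j ∈ Finset.Icc 1 n, n.choose j * (j - 1)!

private lemma fact_div_fact (n k : ℕ) (hk : k ≤ n) :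
    n ! / k ! = n.choose k * (n - k)! := by
  have h := Nat.choose_mul_factorial_mul_factorial hk
  rw [← h]
  rw [Nat.mul_comm (n.choose k) (k !), Nat.mul_assoc]
  exact Nat.mul_div_cancel_left _ (Nat.factorial_pos k)

private lemma sum_fact_div (n : ℕ) :
    ∑ k ∈ Finset.range (n + 1), n ! / k ! =
      ∑ k ∈ Finset.range (n + 1), n.choose k * k ! := by
  have h1 : ∑ k ∈ Finset.range (n + 1), n ! / k ! =
      ∑ k ∈ Finset.range (n + 1), n.choose k * (n - k)! := by
    refine Finset.sum_congr rfl fun k hk => ?_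
    exact fact_div_fact n k (Nat.lt_succ_iff.mp (Finset.mem_range.mp hk))
  rw [h1, ← Finset.sum_range_reflect]
  refine Finset.sum_congr rfl fun k hk => ?_
  have hk' : k ≤ n := Nat.lt_succ_iff.mp (Finset.mem_range.mp hk)
  simp only [Nat.add_sub_cancel]
  rw [Nat.choose_symm hk', Nat.sub_sub_self hk']

private lemma Taux_succ (n : ℕ) :
    Taux (n + 1) = Taux n + ∑ k ∈ Finset.range (n + 1), n.choose k * k ! := by
  unfold Taux
  have h1 : ∀ j ∈ Finset.Icc 1 (n + 1),
      (n + 1).choose j * (j - 1)! = n.choose j * (j - 1)! + n.choose (j - 1) * (j - 1)! := by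
    intro j hj
    obtain ⟨hj1, _⟩ := Finset.mem_Icc.mp hj
    obtain ⟨i, rfl⟩ := Nat.exists_eq_add_of_le hj1
    simp only [Nat.add_comm 1 i, Nat.add_sub_cancel, Nat.choose_succ_succ]
    ring
  rw [Finset.sum_congr rfl h1, Finset.sum_add_distrib]
  congr 1
  · -- drop the j = n+1 term since choose n (n+1) = 0
    rw [Finset.sum_Icc_succ_top (by omega)]
    simp [Nat.choose_succ_self]
  · -- reindex j-1 = k
    rw [show Finset.Icc 1 (n+1) = Finset.map ⟨Nat.succ, Nat.succ_injective⟩ (Finset.range (n+1)) from ?_]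
    · rw [Finset.sum_map]
      simp
    · ext x
      simp [Finset.mem_map, Nat.lt_succ_iff, Nat.succ_eq_add_one]
      constructor
      · rintro ⟨h1, h2⟩; exact ⟨x - 1, by omega, by omega⟩
      · rintro ⟨a, ha, rfl⟩; omega

private lemma M_eq_Taux (M : ℕ → ℕ) (hM1 : M 1 = 1)
    (hMrec : ∀ n : ℕ, 1 ≤ n →
      M (n + 1) = M n + ∑ k ∈ Finset.range (n + 1), n ! / k !) :
    ∀ n : ℕ, 1 ≤ n → M n = Taux n := by
  intro n hn
  induction n with
  | zero => omega
  | succ m ih =>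
    rcases Nat.eq_or_lt_of_le hn with h | h
    · simp [← h, hM1, Taux]
    · have hm : 1 ≤ m := by omega
      rw [hMrec m hm, ih hm, sum_fact_div, Taux_succ]

theorem stmt_11 (M : ℕ → ℕ) (hM1 : M 1 = 1)
    (hMrec : ∀ n : ℕ, 1 ≤ n →
      M (n + 1) = M n + ∑ k ∈ Finset.range (n + 1), n ! / k !) :
    ∀ n : ℕ, 1 ≤ n →
      PowerSeries.coeff (R := ℚ) n (PowerSeries.exp ℚ * logOneSub) = -(M n : ℚ) / (n !) := by
  intro n hn
  rw [M_eq_Taux M hM1 hMrec n hn]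
  rw [PowerSeries.coeff_mul, Finset.Nat.sum_antidiagonal_eq_sum_range_succ_mk]
  have hcoeff : ∀ k ∈ Finset.range (n + 1),
      PowerSeries.coeff k (PowerSeries.exp ℚ) * PowerSeries.coeff (n - k) logOneSub =
        (1 / k !) * (if n - k = 0 then 0 else -(1 / ((n - k : ℕ) : ℚ))) := by
    intro k _
    rw [PowerSeries.coeff_exp, logOneSub, PowerSeries.coeff_mk]
    simp [Algebra.algebraMap_self]
  rw [Finset.sum_congr rfl hcoeff, ← Finset.sum_range_reflect]
  simp only [Nat.add_sub_cancel]
  have hterm : ∀ j ∈ Finset.range (n + 1),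
      (1 / ((n - j)! : ℚ)) * (if n - (n - j) = 0 then 0 else -(1 / ((n - (n - j) : ℕ) : ℚ))) =
        if j = 0 then 0 else -((n.choose j * (j - 1)! : ℕ) : ℚ) / (n ! : ℚ) := by
    intro j hj
    have hj' : j ≤ n := Nat.lt_succ_iff.mp (Finset.mem_range.mp hj)
    rw [Nat.sub_sub_self hj']
    rcases Nat.eq_zero_or_pos j with rfl | hjpos
    · simp
    · rw [if_neg (by omega), if_neg (by omega)]
      have hfac : (n.choose j * (j - 1)! : ℕ) * ((n - j)! * j) = n ! := by
        have h := Nat.choose_mul_factorial_mul_factorial hj'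
        have hjf : j ! = j * (j - 1)! := by
          cases j with
          | zero => omega
          | succ m => simp [Nat.factorial_succ]
        rw [← h, hjf]; ring
      have h1 : ((n - j)! : ℚ) ≠ 0 := Nat.cast_ne_zero.mpr (Nat.factorial_ne_zero _)
      have h2 : (j : ℚ) ≠ 0 := Nat.cast_ne_zero.mpr (by omega)
      have h3 : (n ! : ℚ) ≠ 0 := Nat.cast_ne_zero.mpr (Nat.factorial_ne_zero _)
      field_simp
      rw [← Nat.cast_mul, ← hfac]
      push_cast
      ring
  rw [Finset.sum_congr rfl hterm]
  have hfil : Finset.filter (fun j => ¬ j = 0) (Finset.range (n + 1)) = Finset.Icc 1 n := by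
    ext x; simp [Nat.lt_succ_iff]; omega
  have hstep : (∑ x ∈ Finset.range (n + 1),
      if x = 0 then (0 : ℚ) else -((n.choose x * (x - 1)! : ℕ) : ℚ) / (n ! : ℚ)) =
      ∑ x ∈ Finset.Icc 1 n, -((n.choose x * (x - 1)! : ℕ) : ℚ) / (n ! : ℚ) := by
    rw [← hfil, Finset.sum_filter]
    refine Finset.sum_congr rfl fun x _ => ?_
    by_cases h : x = 0 <;> simp [h]
  rw [hstep, Taux]
  push_cast
  rw [neg_div, Finset.sum_div, ← Finset.sum_neg_distrib]
  refine Finset.sum_congr rfl fun j hj => ?_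
  ring
end

section
/- The logarithmic numbers M(n), defined by −e^x·ln(1−x)=∑_{n≥1} M(n)x^n/n!, satisfy M(n)·n/(e·n!) → 1 as n→∞. -/
open Nat Filter Topology

noncomputable def gfun (n : ℕ) : ℝ :=
  ∑ k ∈ Finset.Icc 1 n, (n : ℝ) / ((k : ℝ) * ((n - k)! : ℝ))

noncomputable def Sfun (n : ℕ) : ℝ := ∑ j ∈ Finset.range n, 1 / (j ! : ℝ)

lemma gfun_alt (n : ℕ) : gfun n = ∑ i ∈ Finset.range n, (n : ℝ) / (((n - i : ℕ) : ℝ) * (i ! : ℝ)) := by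
  rw [gfun]
  apply Finset.sum_nbij' (i := fun k => n - k) (j := fun i => n - i)
  · intro k hk; simp only [Finset.mem_Icc] at hk; simp only [Finset.mem_range]; omega
  · intro i hi; simp only [Finset.mem_range] at hi; simp only [Finset.mem_Icc]; omega
  · intro k hk; simp only [Finset.mem_Icc] at hk; omega
  · intro i hi; simp only [Finset.mem_range] at hi; omega
  · intro k hk
    simp only [Finset.mem_Icc] at hk
    have : n - (n - k) = k := by omega
    rw [this]

lemma gfun_nonneg (n : ℕ) : 0 ≤ gfun n := by
  rw [gfun]
  apply Finset.sum_nonneg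
  intro k _
  positivity

lemma gfun_rec (n : ℕ) (hn : 1 ≤ n) :
    gfun n = Sfun n + gfun (n - 1) / ((n : ℝ) - 1) := by
  obtain ⟨m, rfl⟩ : ∃ m, n = m + 1 := ⟨n - 1, by omega⟩
  rw [gfun_alt, Nat.add_sub_cancel]
  have key : ∀ i ∈ Finset.range (m + 1),
      ((m + 1 : ℕ) : ℝ) / (((m + 1 - i : ℕ) : ℝ) * (i ! : ℝ))
        = 1 / (i ! : ℝ) + (i : ℝ) / (((m + 1 - i : ℕ) : ℝ) * (i ! : ℝ)) := by
    intro i hi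
    rw [Finset.mem_range] at hi
    have hcast : ((m + 1 - i : ℕ) : ℝ) = ((m + 1 : ℕ) : ℝ) - (i : ℝ) := by
      push_cast [Nat.cast_sub (by omega : i ≤ m + 1)]; ring
    have hne : ((m + 1 - i : ℕ) : ℝ) ≠ 0 := by
      have : 0 < m + 1 - i := by omega
      positivity
    have hfac : (i ! : ℝ) ≠ 0 := by positivity
    field_simp
    rw [hcast]
    push_cast
    ring
  rw [Finset.sum_congr rfl key, Finset.sum_add_distrib]
  have hS : ∑ i ∈ Finset.range (m + 1), 1 / (i ! : ℝ) = Sfun (m + 1) := rfl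
  rw [hS]
  congr 1
  -- remaining: ∑ i ∈ range (m+1), i / ((m+1-i) * i!) = gfun m / m
  rw [Finset.sum_range_succ']
  simp only [Nat.cast_zero, zero_div, add_zero]
  have key2 : ∀ i ∈ Finset.range m,
      ((i + 1 : ℕ) : ℝ) / (((m + 1 - (i + 1) : ℕ) : ℝ) * ((i + 1)! : ℝ))
        = 1 / (((m - i : ℕ) : ℝ) * (i ! : ℝ)) := by
    intro i hi
    rw [Finset.mem_range] at hi
    have h1 : m + 1 - (i + 1) = m - i := by omega
    rw [h1, Nat.factorial_succ]
    have hne : ((m - i : ℕ) : ℝ) ≠ 0 := by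
      have : 0 < m - i := by omega
      positivity
    have hfac : (i ! : ℝ) ≠ 0 := by positivity
    push_cast
    field_simp
  rw [Finset.sum_congr rfl key2]
  rcases Nat.eq_zero_or_pos m with rfl | hm
  · simp [gfun]
  · rw [gfun_alt, Finset.sum_div]
    apply Finset.sum_congr rfl
    intro i hi
    rw [Finset.mem_range] at hi
    have hne : ((m - i : ℕ) : ℝ) ≠ 0 := by
      have : 0 < m - i := by omega
      positivity
    have hfac : (i ! : ℝ) ≠ 0 := by positivity
    have hmne : (m : ℝ) ≠ 0 := by positivity
    have : ((m + 1 : ℕ) : ℝ) - 1 = (m : ℝ) := by push_cast; ring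
    rw [this]
    field_simp

lemma Sfun_tendsto : Tendsto Sfun atTop (𝓝 (Real.exp 1)) := by
  have h := NormedSpace.expSeries_div_hasSum_exp (1 : ℝ)
  rw [← Real.exp_eq_exp_ℝ] at h
  have := h.tendsto_sum_nat
  simp only [one_pow] at this
  exact this.congr (fun n => by simp [Sfun])

lemma Sfun_le (n : ℕ) : Sfun n ≤ Real.exp 1 := by
  have hmono : Monotone Sfun := by
    intro a b hab
    apply Finset.sum_le_sum_of_subset_of_nonneg (Finset.range_subset_range.2 hab)
    intro i _ _; positivity
  exact hmono.ge_of_tendsto Sfun_tendsto n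

lemma Sfun_le3 (n : ℕ) : Sfun n ≤ 3 := le_trans (Sfun_le n) (le_of_lt (by
  have := Real.exp_one_lt_d9; linarith))

lemma gfun_le (n : ℕ) : gfun n ≤ 8 := by
  induction n using Nat.strong_induction_on with
  | _ n ih =>
    match n, ih with
    | 0, _ => simp [gfun]
    | 1, _ => norm_num [gfun, Finset.Icc_self, Nat.factorial]
    | 2, _ =>
      rw [gfun]
      rw [show Finset.Icc 1 2 = {1, 2} from rfl]
      norm_num [Nat.factorial]
    | (m + 3), ih =>
      rw [gfun_rec (m + 3) (by omega)]
      have h1 : gfun (m + 3 - 1) ≤ 8 := ih _ (by omega)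
      have h2 : (0:ℝ) ≤ gfun (m + 3 - 1) := gfun_nonneg _
      have h3 : (2:ℝ) ≤ ((m + 3 : ℕ) : ℝ) - 1 := by push_cast; linarith [Nat.cast_nonneg (α := ℝ) m]
      have h4 : gfun (m + 3 - 1) / (((m + 3 : ℕ) : ℝ) - 1) ≤ 8 / 2 :=
        div_le_div₀ (by norm_num) h1 (by norm_num) h3
      linarith [Sfun_le3 (m + 3)]

theorem stmt_12 (M : ℕ → ℝ)
    (hM : ∀ n : ℕ, M n = ∑ k ∈ Finset.Icc 1 n, (n ! : ℝ) / ((k : ℝ) * ((n - k)! : ℝ))) :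
    Tendsto (fun n : ℕ => M n * n / (Real.exp 1 * (n ! : ℝ))) atTop (𝓝 1) := by
  have step1 : ∀ n : ℕ, M n * n / (n ! : ℝ) = gfun n := by
    intro n
    rw [hM n, gfun, Finset.sum_mul, Finset.sum_div]
    apply Finset.sum_congr rfl
    intro k hk
    rw [Finset.mem_Icc] at hk
    have hk0 : ((k : ℝ)) ≠ 0 := by
      have : 0 < k := hk.1
      positivity
    have h1 : ((n ! : ℕ) : ℝ) ≠ 0 := by positivity
    have h2 : (((n - k)! : ℕ) : ℝ) ≠ 0 := by positivity
    field_simp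
  have Dtend : Tendsto (fun n : ℕ => gfun n - Sfun n) atTop (𝓝 0) := by
    apply squeeze_zero' (g := fun n : ℕ => 8 / ((n : ℝ) - 1))
    · filter_upwards [eventually_ge_atTop 1] with n hn
      rw [gfun_rec n hn]
      have := gfun_nonneg (n - 1)
      have hge : (0:ℝ) ≤ (n : ℝ) - 1 := by
        have : (1:ℝ) ≤ (n : ℝ) := by exact_mod_cast hn
        linarith
      have := div_nonneg (gfun_nonneg (n - 1)) hge
      linarith
    · filter_upwards [eventually_ge_atTop 2] with n hn
      rw [gfun_rec n (by omega)]
      have hge : (1:ℝ) ≤ (n : ℝ) - 1 := by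
        have : (2:ℝ) ≤ (n : ℝ) := by exact_mod_cast hn
        linarith
      have h8 := gfun_le (n - 1)
      have h0 := gfun_nonneg (n - 1)
      have : gfun (n - 1) / ((n : ℝ) - 1) ≤ 8 / ((n : ℝ) - 1) :=
        div_le_div_of_nonneg_right h8 (by linarith) |>.trans_eq rfl
      linarith
    · apply Tendsto.div_atTop tendsto_const_nhds
      apply tendsto_atTop_add_const_right
      exact tendsto_natCast_atTop_atTop
  have gtend : Tendsto gfun atTop (𝓝 (Real.exp 1)) := by
    have := Sfun_tendsto.add Dtend
    rw [add_zero] at this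
    exact this.congr (fun n => by ring)
  have key : ∀ n : ℕ, M n * n / (Real.exp 1 * (n ! : ℝ)) = gfun n / Real.exp 1 := by
    intro n
    rw [mul_comm (Real.exp 1), ← div_div, step1 n]
  have := gtend.div_const (Real.exp 1)
  rw [div_self (Real.exp_ne_zero 1)] at this
  exact this.congr (fun n => (key n).symm)
end

section
/- Consider the DSC(2) recursions N_0(n+1)=2N_0(n)+N_1(n), N_1(n+1)=N_0(n)+3N_1(n), N_2(n+1)=N_2(n)+N_1(n) with N_0(0)=1, N_1(0)=0, N_2(0)=0. Then for all n≥0: N_0(n) = ((5−√5)/10)·g₊ⁿ + ((5+√5)/10)·g₋ⁿ, N_1(n) = (g₊ⁿ − g₋ⁿ)/√5, and N_2(n) = 1 + ((3√5−5)/10)·g₊ⁿ − ((3√5+5)/10)·g₋ⁿ, where g₊=(5+√5)/2 and g₋=(5−√5)/2. -/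
private lemma aux0 (s A B : ℝ) (hs : s ^ 2 = 5) (hne : s ≠ 0) :
    2 * ((5 - s) / 10 * A + (5 + s) / 10 * B) + (A - B) / s
      = (5 - s) / 10 * (A * ((5 + s) / 2)) + (5 + s) / 10 * (B * ((5 - s) / 2)) := by
  field_simp
  linear_combination ((s - 4) * A + (s + 4) * B) * hs

private lemma aux1 (s A B : ℝ) (hs : s ^ 2 = 5) (hne : s ≠ 0) :
    ((5 - s) / 10 * A + (5 + s) / 10 * B) + 3 * ((A - B) / s)
      = (A * ((5 + s) / 2) - B * ((5 - s) / 2)) / s := by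
  field_simp
  linear_combination (2 * (B - A)) * hs

private lemma aux2 (s A B : ℝ) (hs : s ^ 2 = 5) (hne : s ≠ 0) :
    (1 + (3 * s - 5) / 10 * A - (3 * s + 5) / 10 * B) + (A - B) / s
      = 1 + (3 * s - 5) / 10 * (A * ((5 + s) / 2)) - (3 * s + 5) / 10 * (B * ((5 - s) / 2)) := by
  field_simp
  linear_combination ((-3 * s - 4) * A + (4 - 3 * s) * B) * hs

theorem stmt_13 (N0 N1 N2 : ℕ → ℝ)
    (h00 : N0 0 = 1) (h10 : N1 0 = 0) (h20 : N2 0 = 0)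
    (h0 : ∀ n : ℕ, N0 (n + 1) = 2 * N0 n + N1 n)
    (h1 : ∀ n : ℕ, N1 (n + 1) = N0 n + 3 * N1 n)
    (h2 : ∀ n : ℕ, N2 (n + 1) = N2 n + N1 n) :
    ∀ n : ℕ,
      N0 n = ((5 - Real.sqrt 5) / 10) * ((5 + Real.sqrt 5) / 2) ^ n
           + ((5 + Real.sqrt 5) / 10) * ((5 - Real.sqrt 5) / 2) ^ n ∧
      N1 n = (((5 + Real.sqrt 5) / 2) ^ n - ((5 - Real.sqrt 5) / 2) ^ n) / Real.sqrt 5 ∧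
      N2 n = 1 + ((3 * Real.sqrt 5 - 5) / 10) * ((5 + Real.sqrt 5) / 2) ^ n
               - ((3 * Real.sqrt 5 + 5) / 10) * ((5 - Real.sqrt 5) / 2) ^ n := by
  have hs : Real.sqrt 5 ^ 2 = 5 := Real.sq_sqrt (by norm_num)
  have hne : Real.sqrt 5 ≠ 0 := by positivity
  intro n
  induction n with
  | zero =>
    refine ⟨by rw [h00]; ring, by rw [h10]; ring, by rw [h20]; ring⟩
  | succ n ih =>
    obtain ⟨i0, i1, i2⟩ := ih
    refine ⟨?_, ?_, ?_⟩
    · rw [h0 n, i0, i1, pow_succ, pow_succ]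
      exact aux0 _ _ _ hs hne
    · rw [h1 n, i0, i1, pow_succ, pow_succ]
      exact aux1 _ _ _ hs hne
    · rw [h2 n, i1, i2, pow_succ, pow_succ]
      exact aux2 _ _ _ hs hne
end

section
/- In the DSC(1) tree of generation n ≥ 3, the number of vertices of degree k equals 2^{n−k} for 1 ≤ k ≤ n−2, equals 2 for k=n−1, equals 2 for k=n, and is 0 for all other k. Consequently the fraction of vertices of degree k is 2^{−k} for k < n. -/
/-- The DSC(1) tree of generation `n`: start from a single vertex `0`; at step
`k+1` (for `k = 0, …, n-1`), every existing vertex `v < 2^k` receives a new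
pendant vertex `v + 2^k`. -/
def dscTree (n : ℕ) : SimpleGraph (Fin (2 ^ n)) :=
  SimpleGraph.fromRel (fun a b => ∃ k < n, (a : ℕ) < 2 ^ k ∧ (b : ℕ) = (a : ℕ) + 2 ^ k)

noncomputable instance (n : ℕ) : DecidableRel (dscTree n).Adj := Classical.decRel _

open SimpleGraph Finset

/-- the explicit neighbor set, as a finset of naturals -/
def nbrSet (n v : ℕ) : Finset ℕ :=
  ((Finset.Ico (Nat.size v) n).image (fun k => v + 2 ^ k)) ∪
    (if v = 0 then ∅ else {v - 2 ^ (Nat.size v - 1)})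

lemma parent_unique {v u k : ℕ} (hu : u < 2 ^ k) (hv : v = u + 2 ^ k) :
    k = Nat.size v - 1 ∧ u = v - 2 ^ (Nat.size v - 1) ∧ Nat.size v = k + 1 := by
  have h1 : 2 ^ k ≤ v := by omega
  have h2 : v < 2 ^ (k + 1) := by rw [pow_succ]; omega
  have hs : Nat.size v = k + 1 := by
    have ha := Nat.size_le.mpr h2
    have hb := Nat.lt_size.mpr h1
    omega
  refine ⟨by omega, ?_, hs⟩
  rw [hs]; simp; omega

lemma image_neighbor (n : ℕ) (v : Fin (2 ^ n)) :
    ((dscTree n).neighborFinset v).image Fin.val = nbrSet n v := by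
  ext w
  simp only [Finset.mem_image, SimpleGraph.mem_neighborFinset, nbrSet, Finset.mem_union]
  constructor
  · rintro ⟨b, hadj, rfl⟩
    obtain ⟨hne, h | h⟩ := hadj
    · obtain ⟨k, hk, hv, hb⟩ := h
      left
      simp only [Finset.mem_image, Finset.mem_Ico]
      exact ⟨k, ⟨Nat.size_le.mpr hv, hk⟩, hb.symm⟩
    · obtain ⟨k, hk, hb, hv⟩ := h
      right
      obtain ⟨h1, h2, h3⟩ := parent_unique hb hv
      have hpos : 0 < 2 ^ k := Nat.two_pow_pos k
      have hv0 : (v : ℕ) ≠ 0 := by omega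
      rw [if_neg hv0, Finset.mem_singleton]
      omega
  · rintro (h | h)
    · simp only [Finset.mem_image, Finset.mem_Ico] at h
      obtain ⟨k, ⟨hsk, hkn⟩, rfl⟩ := h
      have hvk : (v : ℕ) < 2 ^ k := Nat.size_le.mp hsk
      have hw : (v : ℕ) + 2 ^ k < 2 ^ n := by
        have h2 : 2 ^ (k + 1) ≤ 2 ^ n := Nat.pow_le_pow_right (by norm_num) hkn
        have : 2 ^ (k + 1) = 2 ^ k + 2 ^ k := by rw [pow_succ]; omega
        omega
      refine ⟨⟨(v : ℕ) + 2 ^ k, hw⟩, ⟨?_, Or.inl ⟨k, hkn, hvk, rfl⟩⟩, rfl⟩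
      have hpos : 0 < 2 ^ k := Nat.two_pow_pos k
      intro hvb
      have h5 : (v : ℕ) = (v : ℕ) + 2 ^ k := congrArg Fin.val hvb
      omega
    · by_cases hv0 : (v : ℕ) = 0
      · simp [hv0] at h
      · rw [if_neg hv0, Finset.mem_singleton] at h
        subst h
        set s := Nat.size (v : ℕ) with hs
        have hs1 : 1 ≤ s := Nat.size_pos.mpr (Nat.pos_of_ne_zero hv0)
        have hsn : s ≤ n := Nat.size_le.mpr v.isLt
        have hle : 2 ^ (s - 1) ≤ (v : ℕ) := Nat.lt_size.mp (by omega)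
        have hlt : (v : ℕ) < 2 ^ s := Nat.lt_size_self _
        have hlt2 : (v : ℕ) < 2 ^ (s - 1) + 2 ^ (s - 1) := by
          have h3 : 2 ^ (s - 1) + 2 ^ (s - 1) = 2 ^ s := by
            rw [← two_mul, ← pow_succ']
            congr 1; omega
          omega
        have hw : (v : ℕ) - 2 ^ (s - 1) < 2 ^ n := by
          have := v.isLt; omega
        have hpos : 0 < 2 ^ (s - 1) := Nat.two_pow_pos _
        refine ⟨⟨(v : ℕ) - 2 ^ (s - 1), hw⟩,
          ⟨?_, Or.inr ⟨s - 1, by omega, by simpa using by omega, by simpa using by omega⟩⟩, rfl⟩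
        intro hvb
        have h5 : (v : ℕ) = (v : ℕ) - 2 ^ (s - 1) := congrArg Fin.val hvb
        omega

lemma nbrSet_card (n v : ℕ) (hv : v < 2 ^ n) :
    (nbrSet n v).card = n - Nat.size v + (if v = 0 then 0 else 1) := by
  have hinj : Set.InjOn (fun k => v + 2 ^ k) (Finset.Ico (Nat.size v) n) := by
    intro a _ b _ hab
    have hab' : v + 2 ^ a = v + 2 ^ b := hab
    exact Nat.pow_right_injective (le_refl 2) (Nat.add_left_cancel hab')
  have hcard1 : ((Finset.Ico (Nat.size v) n).image (fun k => v + 2 ^ k)).card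
      = n - Nat.size v := by
    rw [Finset.card_image_of_injOn hinj, Nat.card_Ico]
  by_cases hv0 : v = 0
  · rw [nbrSet, if_pos hv0, Finset.union_empty, hcard1, if_pos hv0]
    omega
  · rw [nbrSet, if_neg hv0]
    rw [Finset.card_union_of_disjoint, hcard1, Finset.card_singleton, if_neg hv0]
    rw [Finset.disjoint_singleton_right]
    simp only [Finset.mem_image, Finset.mem_Ico, not_exists]
    rintro k ⟨⟨hsk, hkn⟩, hkeq⟩
    have hkeq' : v + 2 ^ k = v - 2 ^ (Nat.size v - 1) := hkeq
    have hpos : 0 < 2 ^ k := Nat.two_pow_pos _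
    have h1 : v - 2 ^ (Nat.size v - 1) < v + 2 ^ k :=
      lt_of_le_of_lt (Nat.sub_le v _) (Nat.lt_add_of_pos_right hpos)
    exact absurd hkeq'.symm (Nat.ne_of_lt h1)

lemma degree_eq (n : ℕ) (v : Fin (2 ^ n)) :
    (dscTree n).degree v = n - Nat.size (v : ℕ) + (if (v : ℕ) = 0 then 0 else 1) := by
  rw [← SimpleGraph.card_neighborFinset_eq_degree,
    ← Finset.card_image_of_injective _ Fin.val_injective, image_neighbor,
    nbrSet_card n v v.isLt]

/-- degree as a function of the underlying natural number -/
def degNat (n v : ℕ) : ℕ := n - Nat.size v + (if v = 0 then 0 else 1)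

lemma ncard_deg (n k : ℕ) :
    {v : Fin (2 ^ n) | (dscTree n).degree v = k}.ncard
      = ((Finset.range (2 ^ n)).filter (fun v => degNat n v = k)).card := by
  rw [Set.ncard_eq_toFinset_card', Set.toFinset_setOf]
  refine Finset.card_bij (fun v _ => (v : ℕ)) ?_ ?_ ?_
  · intro a ha
    simp only [Finset.mem_filter, Finset.mem_univ, true_and] at ha
    simp only [Finset.mem_filter, Finset.mem_range]
    exact ⟨a.isLt, by rw [degNat, ← degree_eq]; exact ha⟩
  · intro a _ b _ h
    exact Fin.val_injective h
  · intro b hb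
    simp only [Finset.mem_filter, Finset.mem_range] at hb
    refine ⟨⟨b, hb.1⟩, ?_, rfl⟩
    simp only [Finset.mem_filter, Finset.mem_univ, true_and]
    rw [degree_eq]
    exact hb.2

lemma size_pow_bounds {v s : ℕ} (hs : 1 ≤ s) :
    Nat.size v = s ↔ 2 ^ (s - 1) ≤ v ∧ v < 2 ^ s := by
  constructor
  · rintro rfl
    exact ⟨Nat.lt_size.mp (by omega), Nat.lt_size_self _⟩
  · rintro ⟨h1, h2⟩
    have ha := Nat.size_le.mpr h2
    have hb := Nat.lt_size.mpr h1
    omega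

lemma count_mid (n k : ℕ) (hn : 3 ≤ n) (hk1 : 1 ≤ k) (hk2 : k ≤ n - 1) :
    ((Finset.range (2 ^ n)).filter (fun v => degNat n v = k)).card = 2 ^ (n - k) := by
  have hkey : (Finset.range (2 ^ n)).filter (fun v => degNat n v = k)
      = Finset.Ico (2 ^ (n - k)) (2 ^ (n - k + 1)) := by
    ext v
    rw [Finset.mem_filter]
    simp only [Finset.mem_filter, Finset.mem_range, Finset.mem_Ico, degNat]
    constructor
    · rintro ⟨hv, hd⟩
      have hv0 : v ≠ 0 := by
        rintro rfl
        simp only [Nat.size_zero, if_pos rfl] at hd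
        omega
      rw [if_neg hv0] at hd
      have hs1 : 1 ≤ Nat.size v := Nat.size_pos.mpr (Nat.pos_of_ne_zero hv0)
      have hsn : Nat.size v ≤ n := Nat.size_le.mpr hv
      have hsv : Nat.size v = n - k + 1 := by omega
      have := (size_pow_bounds (by omega)).mp hsv
      simpa using this
    · rintro ⟨h1, h2⟩
      have hpos : 0 < 2 ^ (n - k) := Nat.two_pow_pos _
      have hv0 : v ≠ 0 := by omega
      have hsv : Nat.size v = n - k + 1 := by
        rw [size_pow_bounds (by omega)]
        simpa using ⟨h1, h2⟩
      have hv : v < 2 ^ n := by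
        have : 2 ^ (n - k + 1) ≤ 2 ^ n := Nat.pow_le_pow_right (by norm_num) (by omega)
        omega
      refine ⟨hv, ?_⟩
      rw [if_neg hv0, hsv]
      omega
  rw [hkey, Nat.card_Ico]
  have : 2 ^ (n - k + 1) = 2 * 2 ^ (n - k) := by rw [pow_succ]; ring
  omega

lemma count_top (n : ℕ) (hn : 3 ≤ n) :
    ((Finset.range (2 ^ n)).filter (fun v => degNat n v = n)).card = 2 := by
  have hkey : (Finset.range (2 ^ n)).filter (fun v => degNat n v = n) = {0, 1} := by
    ext v
    rw [Finset.mem_filter]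
    simp only [Finset.mem_filter, Finset.mem_range, Finset.mem_insert, Finset.mem_singleton,
      degNat]
    constructor
    · rintro ⟨hv, hd⟩
      by_cases hv0 : v = 0
      · exact Or.inl hv0
      · right
        rw [if_neg hv0] at hd
        have hs1 : 1 ≤ Nat.size v := Nat.size_pos.mpr (Nat.pos_of_ne_zero hv0)
        have hsn : Nat.size v ≤ n := Nat.size_le.mpr hv
        have hsv : Nat.size v = 1 := by omega
        have := (size_pow_bounds (by omega)).mp hsv
        simp at this
        omega
    · have h1 : 1 < 2 ^ n := by
        calc 1 < 2 ^ 3 := by norm_num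
        _ ≤ 2 ^ n := Nat.pow_le_pow_right (by norm_num) hn
      rintro (rfl | rfl)
      · exact ⟨by omega, by simp⟩
      · refine ⟨h1, ?_⟩
        have : Nat.size 1 = 1 := by
          rw [size_pow_bounds le_rfl]; norm_num
        rw [this, if_neg one_ne_zero]
        omega
  rw [hkey]
  rfl

lemma count_out (n k : ℕ) (hn : 3 ≤ n) (hk : ¬(1 ≤ k ∧ k ≤ n)) :
    ((Finset.range (2 ^ n)).filter (fun v => degNat n v = k)).card = 0 := by
  rw [Finset.card_eq_zero, Finset.filter_eq_empty_iff]
  intro v hv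
  simp only [Finset.mem_range] at hv
  simp only [degNat]
  by_cases hv0 : v = 0
  · subst hv0
    simp only [Nat.size_zero]
    norm_num
    omega
  · rw [if_neg hv0]
    have hs1 : 1 ≤ Nat.size v := Nat.size_pos.mpr (Nat.pos_of_ne_zero hv0)
    have hsn : Nat.size v ≤ n := Nat.size_le.mpr hv
    omega

theorem stmt_16 (n : ℕ) (hn : 3 ≤ n) :
    (∀ k : ℕ, 1 ≤ k → k ≤ n - 2 →
      {v : Fin (2 ^ n) | (dscTree n).degree v = k}.ncard = 2 ^ (n - k)) ∧
    {v : Fin (2 ^ n) | (dscTree n).degree v = n - 1}.ncard = 2 ∧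
    {v : Fin (2 ^ n) | (dscTree n).degree v = n}.ncard = 2 ∧
    (∀ k : ℕ, ¬(1 ≤ k ∧ k ≤ n) →
      {v : Fin (2 ^ n) | (dscTree n).degree v = k}.ncard = 0) ∧
    (∀ k : ℕ, 1 ≤ k → k < n →
      {v : Fin (2 ^ n) | (dscTree n).degree v = k}.ncard * 2 ^ k = 2 ^ n) := by
  refine ⟨?_, ?_, ?_, ?_, ?_⟩
  · intro k hk1 hk2
    rw [ncard_deg, count_mid n k hn hk1 (by omega)]
  · rw [ncard_deg, count_mid n (n - 1) hn (by omega) (by omega)]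
    have : n - (n - 1) = 1 := by omega
    rw [this, pow_one]
  · rw [ncard_deg, count_top n hn]
  · intro k hk
    rw [ncard_deg, count_out n k hn hk]
  · intro k hk1 hk2
    rw [ncard_deg, count_mid n k hn hk1 (by omega), ← pow_add]
    congr 1
    omega
end

section
/- Define polynomials over ℤ by Υ_1(λ) = (λ−1)(λ+1) and Υ_{n+1}(λ) = Υ_n(λ)² − λ²·∏_{i=1}^{n−1} Υ_i(λ)² for n ≥ 1 (with the empty product equal to 1). Then for every n ≥ 1, Υ_n is an even polynomial of degree 2^n, and Υ_2(λ) = λ⁴ − 3λ² + 1, Υ_3(λ) = (1+λ−3λ²−λ³+λ⁴)(1−λ−3λ²+λ³+λ⁴). -/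
open Polynomial

lemma geom_icc_sum : ∀ m : ℕ, (∑ i ∈ Finset.Icc 1 m, 2 ^ i) = 2 ^ (m + 1) - 2 := by
  intro m
  induction m with
  | zero => simp
  | succ k ih =>
    rw [Finset.sum_Icc_succ_top (by omega), ih]
    have h2 : 2 ≤ 2 ^ (k + 1) := Nat.one_lt_two_pow (by omega)
    have h3 : 2 ^ (k + 1 + 1) = 2 * 2 ^ (k + 1) := by ring
    omega

theorem stmt_18 (Y : ℕ → Polynomial ℤ)
    (hY1 : Y 1 = (X - 1) * (X + 1))
    (hYrec : ∀ n : ℕ, 1 ≤ n →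
      Y (n + 1) = (Y n) ^ 2 - X ^ 2 * (∏ i ∈ Finset.Icc 1 (n - 1), Y i) ^ 2) :
    (∀ n : ℕ, 1 ≤ n → (Y n).natDegree = 2 ^ n ∧ (Y n).comp (-X) = Y n) ∧
    Y 2 = X ^ 4 - 3 * X ^ 2 + 1 ∧
    Y 3 = (1 + X - 3 * X ^ 2 - X ^ 3 + X ^ 4) * (1 - X - 3 * X ^ 2 + X ^ 3 + X ^ 4) := by
  have hY1' : Y 1 = X ^ 2 - C 1 := by rw [hY1, C_1]; ring
  have key : ∀ n : ℕ, 1 ≤ n →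
      (Y n).Monic ∧ (Y n).natDegree = 2 ^ n ∧ (Y n).comp (-X) = Y n := by
    intro n
    induction n using Nat.strong_induction_on with
    | _ n IH =>
      intro hn
      rcases Nat.lt_or_ge n 2 with h2 | h2
      · -- n = 1
        have hn1 : n = 1 := by omega
        subst hn1
        refine ⟨?_, ?_, ?_⟩
        · rw [hY1']; exact monic_X_pow_sub_C 1 (by norm_num)
        · rw [hY1']
          exact natDegree_X_pow_sub_C
        · rw [hY1]
          simp only [sub_comp, add_comp, mul_comp, X_comp, one_comp]
          ring
      · -- n ≥ 2, write n = m + 1 with m ≥ 1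
        obtain ⟨m, rfl⟩ : ∃ m, n = m + 1 := ⟨n - 1, by omega⟩
        have hm : 1 ≤ m := by omega
        obtain ⟨hmon, hdeg, hcomp⟩ := IH m (by omega) hm
        have hrec := hYrec m hm
        -- product facts
        have hPmon : (∏ i ∈ Finset.Icc 1 (m - 1), Y i).Monic := by
          apply monic_prod_of_monic
          intro i hi
          simp only [Finset.mem_Icc] at hi
          exact (IH i (by omega) hi.1).1
        have hPdeg : (∏ i ∈ Finset.Icc 1 (m - 1), Y i).natDegree = 2 ^ m - 2 := by
          rw [natDegree_prod]
          · have : ∀ i ∈ Finset.Icc 1 (m - 1), (Y i).natDegree = 2 ^ i := by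
              intro i hi
              simp only [Finset.mem_Icc] at hi
              exact (IH i (by omega) hi.1).2.1
            rw [Finset.sum_congr rfl this]
            have := geom_icc_sum (m - 1)
            rw [this, Nat.sub_add_cancel hm]
          · intro i hi
            simp only [Finset.mem_Icc] at hi
            exact (IH i (by omega) hi.1).1.ne_zero
        have hQdeg : (X ^ 2 * (∏ i ∈ Finset.Icc 1 (m - 1), Y i) ^ 2 : Polynomial ℤ).natDegree
            = 2 ^ (m + 1) - 2 := by
          rw [natDegree_mul (pow_ne_zero _ X_ne_zero) (pow_ne_zero _ hPmon.ne_zero),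
            natDegree_X_pow, natDegree_pow, hPdeg]
          have h2 : 2 ≤ 2 ^ m := by
            calc 2 = 2 ^ 1 := rfl
            _ ≤ 2 ^ m := Nat.pow_le_pow_right (by norm_num) hm
          have : 2 ^ (m + 1) = 2 * 2 ^ m := by ring
          omega
        have hlt : (X ^ 2 * (∏ i ∈ Finset.Icc 1 (m - 1), Y i) ^ 2 : Polynomial ℤ).natDegree
            < ((Y m) ^ 2).natDegree := by
          rw [hQdeg, natDegree_pow, hdeg]
          have : 4 ≤ 2 ^ (m + 1) := by
            calc 4 = 2 ^ 2 := rfl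
            _ ≤ 2 ^ (m + 1) := Nat.pow_le_pow_right (by norm_num) (by omega)
          have hh : 2 * 2 ^ m = 2 ^ (m + 1) := by ring
          omega
        have hltd := Polynomial.degree_lt_degree hlt
        refine ⟨?_, ?_, ?_⟩
        · rw [hrec]
          exact (hmon.pow 2).sub_of_left hltd
        · rw [hrec, natDegree_sub_eq_left_of_natDegree_lt hlt, natDegree_pow, hdeg]
          ring
        · rw [hrec]
          simp only [sub_comp, mul_comp, pow_comp, X_comp, prod_comp]
          rw [hcomp]
          refine congrArg₂ (· - ·) rfl (congrArg₂ (· * ·) ?_ ?_)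
          · ring
          · congr 1
            apply Finset.prod_congr rfl
            intro i hi
            simp only [Finset.mem_Icc] at hi
            exact (IH i (by omega) hi.1).2.2
  have hY2 : Y 2 = X ^ 4 - 3 * X ^ 2 + 1 := by
    have := hYrec 1 le_rfl
    simp only [Nat.sub_self, Finset.Icc_eq_empty_of_lt (by norm_num : (1:ℕ) > 0),
      Finset.prod_empty, one_pow, mul_one] at this
    rw [this, hY1]
    ring
  refine ⟨fun n hn => ⟨(key n hn).2.1, (key n hn).2.2⟩, hY2, ?_⟩
  have h3 := hYrec 2 (by norm_num)
  rw [show (2:ℕ) - 1 = 1 from rfl, Finset.Icc_self, Finset.prod_singleton] at h3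
  rw [h3, hY2, hY1]
  ring
end
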